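/- arXiv:1712.08255 — 3 statements merged into one kernel-verified Lean document; each statement's English description precedes it below -/
import Mathlib

section
/- Let A be a locally finite metric space and X a Banach space. Suppose there is a constant C ≥ 1 such that every finite subset of A (with the induced metric) admits a C-bilipschitz embedding into X. Then A itself admits a bilipschitz embedding into X (i.e., a C'-bilipschitz embedding for some finite C' ≥ 1). -/
set_option maxHeartbeats 1600000

/-- A metric space is locally finite if every closed ball of finite radius is finite. -/
def MetricLocallyFinite (A : Type*) [MetricSpace A] : Prop :=
  ∀ (x : A) (R : ℝ), (Metric.closedBall x R).Finite

/-- `f` is a `C`-bilipschitz embedding: there is `r > 0` with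
`r * d(u,v) ≤ d(f u, f v) ≤ r * C * d(u,v)` for all `u, v`. -/
def IsBilipschitzEmbedding {A Y : Type*} [MetricSpace A] [MetricSpace Y]
    (C : ℝ) (f : A → Y) : Prop :=
  ∃ r : ℝ, 0 < r ∧ ∀ u v : A,
    r * dist u v ≤ dist (f u) (f v) ∧ dist (f u) (f v) ≤ r * C * dist u v

namespace FinDet

variable {A : Type*} [MetricSpace A] {X : Type*} [NormedAddCommGroup X] [NormedSpace ℝ X]


/-- One step of the Ramsey construction. -/
lemma ramsey_step (c : ℕ → ℕ → Bool) (U : Set ℕ) (hU : U.Infinite) :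
    ∃ a ∈ U, ∃ b : Bool, ∃ V : Set ℕ, V ⊆ U ∧ V.Infinite ∧
      ∀ n ∈ V, a < n ∧ c a n = b := by
  obtain ⟨a, ha⟩ := hU.nonempty
  have hU' : (U ∩ Set.Ioi a).Infinite := by
    have : U \ Set.Iic a ⊆ U ∩ Set.Ioi a := by
      intro n hn; exact ⟨hn.1, by simpa using hn.2⟩
    exact ((hU.diff (Set.finite_Iic a)).mono this)
  by_cases h : {n ∈ U ∩ Set.Ioi a | c a n = true}.Infinite
  · exact ⟨a, ha, true, _, fun n hn => hn.1.1, h, fun n hn => ⟨hn.1.2, hn.2⟩⟩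
  · have h2 : {n ∈ U ∩ Set.Ioi a | c a n = false}.Infinite := by
      rw [Set.not_infinite] at h
      by_contra h3
      rw [Set.not_infinite] at h3
      apply hU'
      have hsub : U ∩ Set.Ioi a ⊆ {n ∈ U ∩ Set.Ioi a | c a n = true} ∪ {n ∈ U ∩ Set.Ioi a | c a n = false} := by
        intro n hn
        rcases Bool.eq_false_or_eq_true (c a n) with h4 | h4
        · exact Or.inl ⟨hn, h4⟩
        · exact Or.inr ⟨hn, h4⟩
      exact Set.Finite.subset (h.union h3) hsub
    exact ⟨a, ha, false, _, fun n hn => hn.1.1, h2, fun n hn => ⟨hn.1.2, hn.2⟩⟩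

/-- Infinite Ramsey theorem for pairs, two colors. -/
lemma ramsey_bool (c : ℕ → ℕ → Bool) (S : Set ℕ) (hS : S.Infinite) :
    ∃ T : Set ℕ, T ⊆ S ∧ T.Infinite ∧ ∃ b : Bool,
      ∀ m ∈ T, ∀ n ∈ T, m < n → c m n = b := by
  classical
  have key : ∀ U : {U : Set ℕ // U.Infinite ∧ U ⊆ S},
      ∃ p : ℕ × Bool × {V : Set ℕ // V.Infinite ∧ V ⊆ S},
        p.1 ∈ U.1 ∧ p.2.2.1 ⊆ U.1 ∧ ∀ n ∈ p.2.2.1, p.1 < n ∧ c p.1 n = p.2.1 := by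
    intro U
    obtain ⟨a, ha, b, V, hVU, hVinf, hV⟩ := ramsey_step c U.1 U.2.1
    exact ⟨(a, b, ⟨V, hVinf, hVU.trans U.2.2⟩), ha, hVU, hV⟩
  let step : {U : Set ℕ // U.Infinite ∧ U ⊆ S} → ℕ × Bool × {V : Set ℕ // V.Infinite ∧ V ⊆ S} :=
    fun U => Classical.choose (key U)
  have hstep := fun U => Classical.choose_spec (key U)
  let seq : ℕ → {U : Set ℕ // U.Infinite ∧ U ⊆ S} := fun i =>
    Nat.rec ⟨S, hS, subset_rfl⟩ (fun _ U => (step U).2.2) i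
  let a : ℕ → ℕ := fun i => (step (seq i)).1
  let b : ℕ → Bool := fun i => (step (seq i)).2.1
  have hseq : ∀ i, (seq (i+1)).1 ⊆ (seq i).1 := fun i => (hstep (seq i)).2.1
  have hmem : ∀ i, a i ∈ (seq i).1 := fun i => (hstep (seq i)).1
  have hprop : ∀ i, ∀ n ∈ (seq (i+1)).1, a i < n ∧ c (a i) n = b i :=
    fun i => (hstep (seq i)).2.2
  have hnest : ∀ i j, i ≤ j → (seq j).1 ⊆ (seq i).1 := by
    intro i j hij
    induction j with
    | zero => simp_all
    | succ j ih =>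
      rcases Nat.lt_or_ge i (j+1) with h | h
      · exact (hseq j).trans (ih (Nat.lt_succ_iff.mp h))
      · have : i = j + 1 := le_antisymm hij h
        subst this; exact subset_rfl
  have hmono : StrictMono a := by
    apply strictMono_nat_of_lt_succ
    intro i
    exact (hprop i _ (hmem (i+1))).1
  have hcolor : ∀ i j, i < j → c (a i) (a j) = b i := by
    intro i j hij
    have : a j ∈ (seq (i+1)).1 := hnest (i+1) j hij (hmem j)
    exact (hprop i _ this).2
  have hpig : ∃ bb : Bool, {i | b i = bb}.Infinite := by
    by_contra h
    push_neg at h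
    have h1 := h true; have h2 := h false
    have hsub : (Set.univ : Set ℕ) ⊆ {i | b i = true} ∪ {i | b i = false} := by
      intro i _
      rcases Bool.eq_false_or_eq_true (b i) with h4 | h4
      · exact Or.inl h4
      · exact Or.inr h4
    exact Set.infinite_univ (Set.Finite.subset (h1.union h2) hsub)
  obtain ⟨bb, hbb⟩ := hpig
  refine ⟨a '' {i | b i = bb}, ?_, hbb.image (hmono.injective.injOn), bb, ?_⟩
  · rintro _ ⟨i, _, rfl⟩
    exact (seq i).2.2 (hmem i)
  · rintro _ ⟨i, hi, rfl⟩ _ ⟨j, hj, rfl⟩ hij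
    have : i < j := hmono.lt_iff_lt.mp hij
    rw [hcolor i j this]; exact hi

/-- From an infinite set, extract an infinite subset avoiding a "triangle-free" bad relation. -/
lemma extract_no_bad (Bad : ℕ → ℕ → Prop) (S : Set ℕ) (hS : S.Infinite)
    (hsymm : ∀ m n, Bad m n → Bad n m)
    (htri : ∀ a ∈ S, ∀ b ∈ S, ∀ c ∈ S, a < b → b < c → Bad a b → Bad b c → ¬ Bad a c) :
    ∃ T : Set ℕ, T ⊆ S ∧ T.Infinite ∧ ∀ m ∈ T, ∀ n ∈ T, m ≠ n → ¬ Bad m n := by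
  classical
  obtain ⟨T, hTS, hTinf, bb, hmono⟩ :=
    ramsey_bool (fun m n => decide (Bad m n)) S hS
  rcases bb with _ | _
  · -- all non-bad
    refine ⟨T, hTS, hTinf, ?_⟩
    intro m hm n hn hmn
    rcases Ne.lt_or_gt hmn with h | h
    · have := hmono m hm n hn h
      exact of_decide_eq_false this
    · have := hmono n hn m hm h
      intro hb
      exact (of_decide_eq_false this) (hsymm m n hb)
  · -- all bad: contradiction with 3 elements
    exfalso
    obtain ⟨x, hx⟩ := hTinf.nonempty
    obtain ⟨y, hy, hxy⟩ := hTinf.exists_gt x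
    obtain ⟨z, hz, hyz⟩ := hTinf.exists_gt y
    have b1 := hmono x hx y hy hxy
    have b2 := hmono y hy z hz hyz
    have b3 := hmono x hx z hz (hxy.trans hyz)
    exact htri x (hTS hx) y (hTS hy) z (hTS hz) hxy hyz
      (of_decide_eq_true b1) (of_decide_eq_true b2) (of_decide_eq_true b3)



/-- Quantitative anti-alignment lemma: if `u,v` nearly cancel for some convex weight,
and `v,w` nearly cancel, then `u,w` never nearly cancel. -/
lemma three_map (C δ d : ℝ) (hC : 1 ≤ C) (hδ : δ = (((8:ℝ)*(C+1)^2)⁻¹)^2)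
    (hd : 0 < d) (u v w : X)
    (hu1 : d ≤ ‖u‖) (hu2 : ‖u‖ ≤ C * d)
    (hv1 : d ≤ ‖v‖) (hv2 : ‖v‖ ≤ C * d)
    (hw1 : d ≤ ‖w‖) (hw2 : ‖w‖ ≤ C * d)
    (h1 : ∃ l : ℝ, 0 ≤ l ∧ l ≤ 1 ∧ ‖l • u + (1 - l) • v‖ < δ * d)
    (h2 : ∃ l : ℝ, 0 ≤ l ∧ l ≤ 1 ∧ ‖l • v + (1 - l) • w‖ < δ * d) :
    ∀ l : ℝ, 0 ≤ l → l ≤ 1 → δ * d ≤ ‖l • u + (1 - l) • w‖ := by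
  set c₀ : ℝ := ((8:ℝ)*(C+1)^2)⁻¹ with hc₀
  have hC1 : (0:ℝ) < C + 1 := by linarith
  have hc₀pos : 0 < c₀ := by positivity
  have h8pos : (0:ℝ) < 8*(C+1)^2 := by positivity
  have hc₀fact : 8*(C+1)^2 * c₀ = 1 := by
    rw [hc₀]; field_simp
  have hc₀small : c₀ ≤ 1/32 := by
    have h32 : (32:ℝ) ≤ 8*(C+1)^2 := by nlinarith
    calc c₀ = (8*(C+1)^2)⁻¹ := hc₀
      _ ≤ (32:ℝ)⁻¹ := by
          apply inv_anti₀ (by norm_num) h32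
      _ ≤ 1/32 := by norm_num
  have hδpos : 0 < δ := by rw [hδ]; positivity
  have hδc₀ : δ ≤ c₀ := by
    rw [hδ]; nlinarith
  have hδhalf : δ ≤ 1/2 := by linarith
  have step : ∀ p q : X, d ≤ ‖p‖ → ‖p‖ ≤ C*d → d ≤ ‖q‖ → ‖q‖ ≤ C*d →
      (∃ l : ℝ, 0 ≤ l ∧ l ≤ 1 ∧ ‖l • p + (1 - l) • q‖ < δ * d) →
      ∃ s : ℝ, 0 < s ∧ 1 ≤ s*(2*(C+1)) ∧ s ≤ 2*(C+1) ∧ ‖p + s • q‖ ≤ 2*(C+1)*(δ*d) := by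
    intro p q hp1 hp2 hq1 hq2 hex
    obtain ⟨l, hl0, hl1, hl⟩ := hex
    have hnn1 : (0:ℝ) ≤ 1 - l := by linarith
    have hb1 : l * d ≤ δ * d + (1-l) * (C*d) := by
      have t := norm_sub_le (l • p + (1 - l) • q) ((1-l) • q)
      rw [add_sub_cancel_right] at t
      rw [norm_smul, norm_smul, Real.norm_eq_abs, Real.norm_eq_abs,
        abs_of_nonneg hl0, abs_of_nonneg hnn1] at t
      nlinarith
    have hb2 : (1-l) * d ≤ δ * d + l * (C*d) := by
      have t := norm_sub_le (l • p + (1 - l) • q) (l • p)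
      rw [add_sub_cancel_left] at t
      rw [norm_smul, norm_smul, Real.norm_eq_abs, Real.norm_eq_abs,
        abs_of_nonneg hl0, abs_of_nonneg hnn1] at t
      nlinarith
    -- scalar bounds
    have hb1' : l ≤ δ + (1-l)*C := by
      have e : δ*d + (1-l)*(C*d) = (δ + (1-l)*C)*d := by ring
      rw [e] at hb1
      exact le_of_mul_le_mul_right hb1 hd
    have hb2' : 1-l ≤ δ + l*C := by
      have e : δ*d + l*(C*d) = (δ + l*C)*d := by ring
      rw [e] at hb2
      exact le_of_mul_le_mul_right hb2 hd
    have hlb : 1 ≤ 2*(C+1)*l := by nlinarith [hb2', hδhalf, hl0, hl1]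
    have hlb2 : 1 ≤ 2*(C+1)*(1-l) := by nlinarith [hb1', hδhalf, hl0, hl1]
    have hlpos : 0 < l := by nlinarith [hlb, hC1, hl0]
    have hl1pos : 0 < 1 - l := by nlinarith [hlb2, hC1, hl1]
    refine ⟨(1-l)/l, by positivity, ?_, ?_, ?_⟩
    · rw [div_mul_eq_mul_div, le_div_iff₀ hlpos]
      nlinarith
    · rw [div_le_iff₀ hlpos]
      nlinarith
    · have e2 : p + ((1-l)/l) • q = l⁻¹ • (l • p + (1 - l) • q) := by
        rw [smul_add, smul_smul, smul_smul, inv_mul_cancel₀ (ne_of_gt hlpos), one_smul,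
          inv_mul_eq_div]
      rw [e2, norm_smul, Real.norm_eq_abs, abs_of_nonneg (le_of_lt (inv_pos.mpr hlpos))]
      have hinv : l⁻¹ ≤ 2*(C+1) := by
        rw [inv_eq_one_div, div_le_iff₀ hlpos]
        linarith
      calc l⁻¹ * ‖l • p + (1-l) • q‖ ≤ (2*(C+1)) * (δ*d) :=
            mul_le_mul hinv (le_of_lt hl) (norm_nonneg _) (by positivity)
        _ = 2*(C+1)*(δ*d) := by ring
  obtain ⟨s, hspos, hs1, hs2, hsv⟩ := step u v hu1 hu2 hv1 hv2 h1
  obtain ⟨t, htpos, ht1, ht2, htw⟩ := step v w hv1 hv2 hw1 hw2 h2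
  have hkey : ‖u - (s*t) • w‖ ≤ c₀ * d := by
    have e3 : u - (s*t) • w = (u + s • v) - s • (v + t • w) := by
      rw [smul_add, smul_smul]; abel
    rw [e3]
    have hsn : ‖s • (v + t • w)‖ = s * ‖v + t • w‖ := by
      rw [norm_smul, Real.norm_eq_abs, abs_of_pos hspos]
    calc ‖(u + s • v) - s • (v + t • w)‖ ≤ ‖u + s • v‖ + ‖s • (v + t • w)‖ := norm_sub_le _ _
      _ ≤ 2*(C+1)*(δ*d) + s * (2*(C+1)*(δ*d)) := by
          rw [hsn]
          have := mul_le_mul_of_nonneg_left htw (le_of_lt hspos)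
          linarith
      _ ≤ 2*(C+1)*(δ*d) + 2*(C+1) * (2*(C+1)*(δ*d)) := by
          have h0 : (0:ℝ) ≤ 2*(C+1)*(δ*d) := by positivity
          nlinarith
      _ ≤ 8*(C+1)^2*δ*d := by
          have hE : 0 < δ*d := mul_pos hδpos hd
          have h2' : (0:ℝ) ≤ 2*(C+1)*(2*C+1) := by nlinarith
          have h3' : 0 ≤ 2*(C+1)*(2*C+1)*(δ*d) := mul_nonneg h2' hE.le
          have h4' : 8*(C+1)^2*δ*d - (2*(C+1)*(δ*d) + 2*(C+1)*(2*(C+1)*(δ*d))) = 2*(C+1)*(2*C+1)*(δ*d) := by ring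
          linarith
      _ = c₀ * d := by
          rw [hδ]
          calc 8*(C+1)^2*c₀^2*d = (8*(C+1)^2*c₀)*(c₀*d) := by ring
            _ = 1*(c₀*d) := by rw [hc₀fact]
            _ = c₀*d := by ring
  have hst : 2*c₀ ≤ s*t := by
    have hprod : 1 ≤ (s*t)*(4*(C+1)^2) := by nlinarith
    have h2c : (2*c₀)*(4*(C+1)^2) = 1 := by
      calc (2*c₀)*(4*(C+1)^2) = 8*(C+1)^2*c₀ := by ring
        _ = 1 := hc₀fact
    nlinarith
  intro l hl0 hl1
  have e4 : l • u + (1 - l) • w = l • (u - (s*t) • w) + (l*(s*t) + (1-l)) • w := by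
    rw [smul_sub, smul_smul, add_smul]
    abel
  have hcoef : 2*c₀ ≤ l*(s*t) + (1-l) := by nlinarith
  have hcoefpos : (0:ℝ) ≤ l*(s*t) + (1-l) := by nlinarith
  have hmain : (l*(s*t) + (1-l)) * d - l * (c₀ * d) ≤ ‖l • u + (1 - l) • w‖ := by
    rw [e4]
    have t1 := norm_sub_le (l • (u - (s*t) • w) + (l*(s*t) + (1-l)) • w) (l • (u - (s*t) • w))
    rw [add_sub_cancel_left] at t1
    have t2 : (l*(s*t) + (1-l)) * d ≤ ‖(l*(s*t) + (1-l)) • w‖ := by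
      rw [norm_smul, Real.norm_eq_abs, abs_of_nonneg hcoefpos]
      exact mul_le_mul_of_nonneg_left hw1 hcoefpos
    have t3 : ‖l • (u - (s*t) • w)‖ ≤ l * (c₀ * d) := by
      rw [norm_smul, Real.norm_eq_abs, abs_of_nonneg hl0]
      exact mul_le_mul_of_nonneg_left hkey hl0
    linarith
  have k1 : 2*c₀*d ≤ (l*(s*t)+(1-l))*d := mul_le_mul_of_nonneg_right hcoef hd.le
  have k2 : l*(c₀*d) ≤ c₀*d := by nlinarith [mul_pos hc₀pos hd]
  have k3 : δ*d ≤ c₀*d := mul_le_mul_of_nonneg_right hδc₀ hd.le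
  linarith



def GoodOn (O : A) (C : ℝ) (g : A → X) (r : ℝ) : Prop :=
  g O = 0 ∧ ∀ x y : A, dist x O ≤ r → dist y O ≤ r →
    dist x y ≤ ‖g x - g y‖ ∧ ‖g x - g y‖ ≤ C * dist x y

def CompatOn (O : A) (δ : ℝ) (g g' : A → X) (r : ℝ) : Prop :=
  ∀ x y : A, dist x O ≤ r → dist y O ≤ r → ∀ l : ℝ, 0 ≤ l → l ≤ 1 →
    δ * dist x y ≤ ‖l • (g x - g y) + (1 - l) • (g' x - g' y)‖

/-- The glued map: master estimate. -/
lemma master (O : A) (C δ L : ℝ) (hC : 1 ≤ C) (hδ0 : 0 < δ) (hδ1 : δ ≤ 1)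
    (hL0 : 0 < L)
    (hL2 : 2*C/L ≤ δ/8)
    (hL4 : Real.exp (-L) ≤ δ/(2*C))
    (hδC2 : δ/(2*C) ≤ 1/2)
    (G : ℕ → A → X)
    (hG : ∀ k : ℕ, GoodOn O C (G k) (Real.exp (((k:ℝ)+2) * L)))
    (hW : ∀ k : ℕ, CompatOn O δ (G k) (G (k+1)) (Real.exp (((k:ℝ)+2) * L))) :
    ∃ f : A → X, ∀ x y : A,
      (δ/4) * dist x y ≤ ‖f x - f y‖ ∧ ‖f x - f y‖ ≤ (4*C) * dist x y := by
  classical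
  have hCpos : (0:ℝ) < C := by linarith
  set R : ℕ → ℝ := fun k => Real.exp ((k:ℝ) * L) with hRdef
  have hRpos : ∀ k, 0 < R k := fun k => Real.exp_pos _
  have hRmono : ∀ {k m : ℕ}, k ≤ m → R k ≤ R m := by
    intro k m h
    apply Real.exp_le_exp.mpr
    apply mul_le_mul_of_nonneg_right _ hL0.le
    exact_mod_cast h
  have hGR : ∀ k, GoodOn O C (G k) (R (k+2)) := by
    intro k
    have h := hG k
    have e : ((k:ℝ)+2) * L = (((k+2:ℕ)):ℝ) * L := by push_cast; ring
    rwa [e] at h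
  have hWR : ∀ k, CompatOn O δ (G k) (G (k+1)) (R (k+2)) := by
    intro k
    have h := hW k
    have e : ((k:ℝ)+2) * L = (((k+2:ℕ)):ℝ) * L := by push_cast; ring
    rwa [e] at h
  have hGO : ∀ k, G k O = 0 := fun k => (hGR k).1
  have hO_in : ∀ k : ℕ, dist O O ≤ R k := by
    intro k; rw [dist_self]; exact (hRpos k).le
  have hval : ∀ (k : ℕ) (x : A), dist x O ≤ R (k+2) → ‖G k x‖ ≤ C * dist x O := by
    intro k x hx
    have h := ((hGR k).2 x O hx (hO_in (k+2))).2
    rwa [hGO, sub_zero] at h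
  -- index and weight
  set ρ : A → ℝ := fun x => dist x O with hρdef
  have hρ0 : ∀ x, 0 ≤ ρ x := fun x => dist_nonneg
  set idx : A → ℕ := fun x => ⌊Real.log (ρ x) / L⌋₊ with hidxdef
  set μ : A → ℝ := fun x => if idx x = 0 then 0 else Real.log (ρ x) / L - idx x with hμdef
  -- basic index facts
  have hidx_lt : ∀ x, ρ x < R (idx x + 1) := by
    intro x
    rcases le_or_gt (ρ x) 0 with h | h
    · exact lt_of_le_of_lt h (hRpos _)
    · have h1 : Real.log (ρ x) / L < (idx x : ℝ) + 1 := by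
        have := Nat.lt_succ_floor (Real.log (ρ x) / L)
        push_cast at this
        exact this
      have h2 : Real.log (ρ x) < ((idx x : ℝ) + 1) * L := by
        rw [div_lt_iff₀ hL0] at h1; linarith [h1]
      calc ρ x = Real.exp (Real.log (ρ x)) := (Real.exp_log h).symm
        _ < Real.exp (((idx x : ℝ) + 1) * L) := Real.exp_lt_exp.mpr h2
        _ = R (idx x + 1) := by rw [hRdef]; push_cast; ring_nf
  have hidx_ge : ∀ x, idx x ≠ 0 → R (idx x) ≤ ρ x := by
    intro x h
    have hρpos : 0 < ρ x := by
      by_contra hc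
      push_neg at hc
      have hz : ρ x = 0 := le_antisymm hc (hρ0 x)
      apply h
      rw [hidxdef]
      simp only [hz, Real.log_zero, zero_div, Nat.floor_zero]
    have hnn : 0 ≤ Real.log (ρ x) / L := by
      by_contra hc
      push_neg at hc
      apply h
      rw [hidxdef]
      exact Nat.floor_of_nonpos hc.le
    have h1 : (idx x : ℝ) ≤ Real.log (ρ x) / L := Nat.floor_le hnn
    have h2 : (idx x : ℝ) * L ≤ Real.log (ρ x) := by
      rw [le_div_iff₀ hL0] at h1; linarith
    calc R (idx x) = Real.exp ((idx x : ℝ) * L) := rfl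
      _ ≤ Real.exp (Real.log (ρ x)) := Real.exp_le_exp.mpr h2
      _ = ρ x := Real.exp_log hρpos
  have hle_idx : ∀ (x : A) (m : ℕ), R m ≤ ρ x → m ≤ idx x := by
    intro x m h
    have hρpos : 0 < ρ x := lt_of_lt_of_le (hRpos m) h
    have h1 : (m:ℝ) * L ≤ Real.log (ρ x) := by
      calc (m:ℝ) * L = Real.log (R m) := by rw [hRdef]; simp [Real.log_exp]
        _ ≤ Real.log (ρ x) := Real.log_le_log (hRpos m) h
    have h2 : (m:ℝ) ≤ Real.log (ρ x) / L := by
      rw [le_div_iff₀ hL0]; linarith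
    exact Nat.le_floor h2
  have hidx_mono : ∀ x y, ρ y ≤ ρ x → idx y ≤ idx x := by
    intro x y h
    by_cases h0 : idx y = 0
    · omega
    · exact hle_idx x (idx y) (le_trans (hidx_ge y h0) h)
  have hμ_nonneg : ∀ x, 0 ≤ μ x := by
    intro x
    rw [hμdef]
    by_cases h0 : idx x = 0
    · simp [h0]
    · simp only [h0, if_false]
      have hnn : 0 ≤ Real.log (ρ x) / L := by
        by_contra hc
        push_neg at hc
        exact h0 (Nat.floor_of_nonpos hc.le)
      have := Nat.floor_le hnn
      rw [hidxdef]
      simp only [sub_nonneg]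
      exact this
  have hμ_le_one : ∀ x, μ x ≤ 1 := by
    intro x
    rw [hμdef]
    by_cases h0 : idx x = 0
    · simp [h0]
    · simp only [h0, if_false]
      have := Nat.lt_succ_floor (Real.log (ρ x) / L)
      push_cast at this
      rw [hidxdef]
      simp only
      linarith [this]
  have hμ_eq : ∀ x, idx x ≠ 0 → μ x = Real.log (ρ x) / L - idx x := by
    intro x h; rw [hμdef]; simp [h]
  set f : A → X := fun z => (1 - μ z) • G (idx z - 1) z + μ z • G (idx z) z with hfdef
  have hf0 : ∀ z, idx z = 0 → f z = G 0 z := by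
    intro z h
    rw [hfdef]
    simp only [h, hμdef, if_pos]
    norm_num
  -- value bounds
  have hSup : ∀ z, ‖f z‖ ≤ C * ρ z := by
    intro z
    by_cases h0 : idx z = 0
    · rw [hf0 z h0]
      apply hval 0 z
      calc ρ z ≤ R (idx z + 1) := (hidx_lt z).le
        _ = R 1 := by rw [h0]
        _ ≤ R 2 := hRmono (by norm_num)
    · have hdom1 : ρ z ≤ R ((idx z - 1) + 2) := by
        have e : (idx z - 1) + 2 = idx z + 1 := by omega
        rw [e]
        exact (hidx_lt z).le
      have hdom2 : ρ z ≤ R (idx z + 2) := le_trans (hidx_lt z).le (hRmono (by omega))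
      calc ‖f z‖ ≤ ‖(1 - μ z) • G (idx z - 1) z‖ + ‖μ z • G (idx z) z‖ := norm_add_le _ _
        _ = (1 - μ z) * ‖G (idx z - 1) z‖ + μ z * ‖G (idx z) z‖ := by
            rw [norm_smul, norm_smul, Real.norm_eq_abs, Real.norm_eq_abs,
              abs_of_nonneg (by linarith [hμ_le_one z] : (0:ℝ) ≤ 1 - μ z),
              abs_of_nonneg (hμ_nonneg z)]
        _ ≤ (1 - μ z) * (C * ρ z) + μ z * (C * ρ z) := by
            apply add_le_add
            · exact mul_le_mul_of_nonneg_left (hval _ z hdom1) (by linarith [hμ_le_one z])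
            · exact mul_le_mul_of_nonneg_left (hval _ z hdom2) (hμ_nonneg z)
        _ = C * ρ z := by ring
  have hInf : ∀ z, idx z ≠ 0 → δ * ρ z ≤ ‖f z‖ := by
    intro z h0
    have hk1 : (idx z - 1) + 1 = idx z := by omega
    have hk2 : (idx z - 1) + 2 = idx z + 1 := by omega
    have hzdom : dist z O ≤ R ((idx z - 1) + 2) := by
      rw [hk2]; exact (hidx_lt z).le
    have hcomp := hWR (idx z - 1) z O hzdom (hO_in _) (1 - μ z)
      (by linarith [hμ_le_one z]) (by linarith [hμ_nonneg z])
    rw [hGO, hGO, sub_zero, sub_zero, hk1] at hcomp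
    have e : (1 : ℝ) - (1 - μ z) = μ z := by ring
    rw [e] at hcomp
    exact hcomp
  refine ⟨f, ?_⟩
  have key : ∀ x y : A, ρ y ≤ ρ x →
      (δ/4) * dist x y ≤ ‖f x - f y‖ ∧ ‖f x - f y‖ ≤ (4*C) * dist x y := by
    intro x y hρxy
    by_cases hxy : x = y
    · subst hxy
      simp [dist_self]
    have hd : 0 < dist x y := dist_pos.mpr hxy
    have hd1 : ρ x - ρ y ≤ dist x y := by
      have := abs_dist_sub_le x y O
      rw [abs_sub_le_iff] at this
      exact this.1
    have hd2 : dist x y ≤ ρ x + ρ y := by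
      calc dist x y ≤ dist x O + dist O y := dist_triangle x O y
        _ = ρ x + ρ y := by rw [dist_comm O y]
    have hjk : idx y ≤ idx x := hidx_mono x y hρxy
    have hT1small : (2*C/L) * dist x y ≤ (δ/8) * dist x y :=
      mul_le_mul_of_nonneg_right hL2 hd.le
    rcases eq_or_lt_of_le hjk with hjeq | hjlt
    · -- same band
      by_cases h0 : idx x = 0
      · -- band 0
        have h0y : idx y = 0 := by omega
        rw [hf0 x h0, hf0 y h0y]
        have hxdom : dist x O ≤ R 2 := by
          calc dist x O ≤ R (idx x + 1) := (hidx_lt x).le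
            _ = R 1 := by rw [h0]
            _ ≤ R 2 := hRmono (by norm_num)
        have hydom : dist y O ≤ R 2 := le_trans hρxy hxdom
        obtain ⟨hlow, hup⟩ := (hGR 0).2 x y hxdom hydom
        constructor
        · calc (δ/4) * dist x y ≤ 1 * dist x y :=
              mul_le_mul_of_nonneg_right (by linarith : δ/4 ≤ (1:ℝ)) hd.le
            _ = dist x y := by ring
            _ ≤ ‖G 0 x - G 0 y‖ := hlow
        · calc ‖G 0 x - G 0 y‖ ≤ C * dist x y := hup
            _ ≤ 4*C * dist x y := by nlinarith
      · -- same band, k ≥ 1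
        have h0y : idx y ≠ 0 := by omega
        have hk1 : (idx x - 1) + 1 = idx x := by omega
        have hk2 : (idx x - 1) + 2 = idx x + 1 := by omega
        have hρypos : 0 < ρ y := lt_of_lt_of_le (hRpos _) (hidx_ge y h0y)
        have hρxpos : 0 < ρ x := lt_of_lt_of_le hρypos hρxy
        have hfx : f x = (1 - μ x) • G (idx x - 1) x + μ x • G (idx x) x := by
          simp only [hfdef]
        have hfy : f y = (1 - μ y) • G (idx x - 1) y + μ y • G (idx x) y := by
          simp only [hfdef, hjeq]
        set M : X := (1 - μ x) • (G (idx x - 1) x - G (idx x - 1) y)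
            + μ x • (G (idx x) x - G (idx x) y) with hMdef
        set T : X := (μ x - μ y) • (G (idx x) y - G (idx x - 1) y) with hTdef
        have hiden : f x - f y = M + T := by
          rw [hfx, hfy, hMdef, hTdef]; module
        have hdomx1 : dist x O ≤ R ((idx x - 1) + 2) := by
          rw [hk2]; exact (hidx_lt x).le
        have hdomy1 : dist y O ≤ R ((idx x - 1) + 2) := le_trans hρxy hdomx1
        have hdomx2 : dist x O ≤ R (idx x + 2) := le_trans (hidx_lt x).le (hRmono (by omega))
        have hdomy2 : dist y O ≤ R (idx x + 2) := le_trans hρxy hdomx2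
        have hcomp := hWR (idx x - 1) x y hdomx1 hdomy1 (1 - μ x)
          (by linarith [hμ_le_one x]) (by linarith [hμ_nonneg x])
        rw [hk1] at hcomp
        have e1 : (1:ℝ) - (1 - μ x) = μ x := by ring
        rw [e1] at hcomp
        -- hcomp : δ * dist x y ≤ ‖M‖
        have hMup : ‖M‖ ≤ C * dist x y := by
          rw [hMdef]
          calc ‖(1 - μ x) • (G (idx x - 1) x - G (idx x - 1) y) + μ x • (G (idx x) x - G (idx x) y)‖
              ≤ ‖(1 - μ x) • (G (idx x - 1) x - G (idx x - 1) y)‖ + ‖μ x • (G (idx x) x - G (idx x) y)‖ :=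
              norm_add_le _ _
            _ = (1 - μ x) * ‖G (idx x - 1) x - G (idx x - 1) y‖ + μ x * ‖G (idx x) x - G (idx x) y‖ := by
                rw [norm_smul, norm_smul, Real.norm_eq_abs, Real.norm_eq_abs,
                  abs_of_nonneg (by linarith [hμ_le_one x] : (0:ℝ) ≤ 1 - μ x),
                  abs_of_nonneg (hμ_nonneg x)]
            _ ≤ (1 - μ x) * (C * dist x y) + μ x * (C * dist x y) := by
                apply add_le_add
                · exact mul_le_mul_of_nonneg_left ((hGR _).2 x y hdomx1 hdomy1).2
                    (by linarith [hμ_le_one x])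
                · exact mul_le_mul_of_nonneg_left ((hGR _).2 x y hdomx2 hdomy2).2 (hμ_nonneg x)
            _ = C * dist x y := by ring
        have hlogle : Real.log (ρ y) ≤ Real.log (ρ x) := Real.log_le_log hρypos hρxy
        have hμdiff0 : 0 ≤ μ x - μ y := by
          rw [hμ_eq x h0, hμ_eq y h0y, hjeq]
          have h2 : Real.log (ρ y)/L ≤ Real.log (ρ x)/L :=
            (div_le_div_iff_of_pos_right hL0).mpr hlogle
          linarith
        have hμdiff_le : μ x - μ y ≤ dist x y / (ρ y * L) := by
          rw [hμ_eq x h0, hμ_eq y h0y, hjeq]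
          have e2 : Real.log (ρ x)/L - (idx x : ℝ) - (Real.log (ρ y)/L - (idx x : ℝ))
              = (Real.log (ρ x) - Real.log (ρ y))/L := by ring
          rw [e2]
          have hlog2 : Real.log (ρ x) - Real.log (ρ y) ≤ dist x y / ρ y := by
            rw [← Real.log_div (ne_of_gt hρxpos) (ne_of_gt hρypos)]
            have h3 := Real.log_le_sub_one_of_pos (div_pos hρxpos hρypos)
            have e3 : ρ x / ρ y - 1 = (ρ x - ρ y)/ρ y := by field_simp
            have h4 : (ρ x - ρ y)/ρ y ≤ dist x y / ρ y :=
              (div_le_div_iff_of_pos_right hρypos).mpr hd1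
            linarith
          calc (Real.log (ρ x) - Real.log (ρ y))/L ≤ (dist x y / ρ y)/L :=
              (div_le_div_iff_of_pos_right hL0).mpr hlog2
            _ = dist x y / (ρ y * L) := by field_simp
        have hTnorm : ‖T‖ ≤ (2*C/L) * dist x y := by
          rw [hTdef, norm_smul, Real.norm_eq_abs, abs_of_nonneg hμdiff0]
          have hV : ‖G (idx x) y - G (idx x - 1) y‖ ≤ 2*C*ρ y := by
            calc ‖G (idx x) y - G (idx x - 1) y‖ ≤ ‖G (idx x) y‖ + ‖G (idx x - 1) y‖ :=
                norm_sub_le _ _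
              _ ≤ C * ρ y + C * ρ y := add_le_add (hval _ y hdomy2) (hval _ y hdomy1)
              _ = 2*C*ρ y := by ring
          calc (μ x - μ y) * ‖G (idx x) y - G (idx x - 1) y‖
              ≤ (dist x y / (ρ y * L)) * (2*C*ρ y) := by
                apply mul_le_mul hμdiff_le hV (norm_nonneg _) (by positivity)
            _ = (2*C/L) * dist x y := by field_simp
        have hlb : ‖M‖ ≤ ‖f x - f y‖ + ‖T‖ := by
          have e4 : M = (f x - f y) - T := by rw [hiden]; abel
          rw [e4]; exact norm_sub_le _ _
        have hub : ‖f x - f y‖ ≤ ‖M‖ + ‖T‖ := by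
          rw [hiden]; exact norm_add_le _ _
        constructor
        · nlinarith [hcomp, hlb, hTnorm, hT1small, hd]
        · nlinarith [hub, hMup, hTnorm, hT1small, hd, mul_pos hCpos hd]
    · -- different bands
      have h0 : idx x ≠ 0 := by omega
      have hρx_ge : R (idx x) ≤ ρ x := hidx_ge x h0
      have hρxpos : 0 < ρ x := lt_of_lt_of_le (hRpos _) hρx_ge
      have hρy_lt : ρ y < R (idx x) :=
        lt_of_lt_of_le (hidx_lt y) (hRmono (by omega))
      by_cases hRAD : 2*C*ρ y ≤ δ*ρ x
      · -- radial case
        have hfxl := hInf x h0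
        have hfyu := hSup y
        have hns := norm_sub_norm_le (f x) (f y)
        have hy2 : ρ y ≤ ρ x / 2 := by nlinarith
        constructor
        · have k1 : (δ/4)*dist x y ≤ (δ/4)*(ρ x + ρ y) :=
            mul_le_mul_of_nonneg_left hd2 (by positivity)
          nlinarith
        · have hup' : ‖f x - f y‖ ≤ ‖f x‖ + ‖f y‖ := norm_sub_le _ _
          have hx2d : ρ x ≤ 2 * dist x y := by nlinarith
          have : C * ρ x ≤ C * (2 * dist x y) := mul_le_mul_of_nonneg_left hx2d hCpos.le
          nlinarith [hSup x]
      · -- near case: idx y = idx x - 1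
        push_neg at hRAD
        have hρypos : 0 < ρ y := by nlinarith
        have h2Cpos : (0:ℝ) < 2*C := by linarith
        have hk1le : 1 ≤ idx x := by omega
        have hcast : ((idx x - 1 : ℕ):ℝ) = (idx x : ℝ) - 1 := by
          rw [Nat.cast_sub hk1le]; norm_num
        have hRk1 : R (idx x - 1) ≤ ρ y := by
          have e : R (idx x - 1) = R (idx x) * Real.exp (-L) := by
            rw [hRdef]
            simp only
            rw [← Real.exp_add, hcast]
            ring_nf
          rw [e]
          calc R (idx x) * Real.exp (-L) ≤ R (idx x) * (δ/(2*C)) :=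
              mul_le_mul_of_nonneg_left hL4 (hRpos _).le
            _ ≤ ρ x * (δ/(2*C)) := mul_le_mul_of_nonneg_right hρx_ge (by positivity)
            _ ≤ ρ y := by
                rw [mul_div_assoc']
                rw [div_le_iff₀ h2Cpos]
                nlinarith
        have hjeq : idx y = idx x - 1 :=
          le_antisymm (by omega) (hle_idx y (idx x - 1) hRk1)
        have hk1succ : (idx x - 1) + 1 = idx x := by omega
        have hk1p2 : (idx x - 1) + 2 = idx x + 1 := by omega
        have hfx : f x = (1 - μ x) • G (idx x - 1) x + μ x • G (idx x) x := by
          simp only [hfdef]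
        have hfy : f y = (1 - μ y) • G ((idx x - 1) - 1) y + μ y • G (idx x - 1) y := by
          simp only [hfdef, hjeq]
        set M : X := (1 - μ x) • (G (idx x - 1) x - G (idx x - 1) y)
            + μ x • (G (idx x) x - G (idx x) y) with hMdef
        set T1 : X := μ x • (G (idx x) y - G (idx x - 1) y) with hT1def
        set T2 : X := (1 - μ y) • (G (idx x - 1) y - G ((idx x - 1) - 1) y) with hT2def
        have hiden : f x - f y = M + (T1 + T2) := by
          rw [hfx, hfy, hMdef, hT1def, hT2def]; module
        have hdomx1 : dist x O ≤ R ((idx x - 1) + 2) := by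
          rw [hk1p2]; exact (hidx_lt x).le
        have hdomy1 : dist y O ≤ R ((idx x - 1) + 2) := le_trans hρxy hdomx1
        have hdomx2 : dist x O ≤ R (idx x + 2) := le_trans (hidx_lt x).le (hRmono (by omega))
        have hdomy2 : dist y O ≤ R (idx x + 2) := le_trans hρxy hdomx2
        have hdomy0 : dist y O ≤ R (((idx x - 1) - 1) + 2) := by
          have h5 : idx x ≤ ((idx x - 1) - 1) + 2 := by omega
          exact le_trans hρy_lt.le (hRmono h5)
        have hcomp := hWR (idx x - 1) x y hdomx1 hdomy1 (1 - μ x)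
          (by linarith [hμ_le_one x]) (by linarith [hμ_nonneg x])
        rw [hk1succ] at hcomp
        have e1 : (1:ℝ) - (1 - μ x) = μ x := by ring
        rw [e1] at hcomp
        have hMup : ‖M‖ ≤ C * dist x y := by
          rw [hMdef]
          calc ‖(1 - μ x) • (G (idx x - 1) x - G (idx x - 1) y) + μ x • (G (idx x) x - G (idx x) y)‖
              ≤ ‖(1 - μ x) • (G (idx x - 1) x - G (idx x - 1) y)‖ + ‖μ x • (G (idx x) x - G (idx x) y)‖ :=
              norm_add_le _ _
            _ = (1 - μ x) * ‖G (idx x - 1) x - G (idx x - 1) y‖ + μ x * ‖G (idx x) x - G (idx x) y‖ := by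
                rw [norm_smul, norm_smul, Real.norm_eq_abs, Real.norm_eq_abs,
                  abs_of_nonneg (by linarith [hμ_le_one x] : (0:ℝ) ≤ 1 - μ x),
                  abs_of_nonneg (hμ_nonneg x)]
            _ ≤ (1 - μ x) * (C * dist x y) + μ x * (C * dist x y) := by
                apply add_le_add
                · exact mul_le_mul_of_nonneg_left ((hGR _).2 x y hdomx1 hdomy1).2
                    (by linarith [hμ_le_one x])
                · exact mul_le_mul_of_nonneg_left ((hGR _).2 x y hdomx2 hdomy2).2 (hμ_nonneg x)
            _ = C * dist x y := by ring
        -- μ x ≤ d / (R (idx x) * L)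
        have hμx_le : μ x ≤ dist x y / (R (idx x) * L) := by
          rw [hμ_eq x h0]
          have e5 : Real.log (ρ x)/L - (idx x : ℝ) = (Real.log (ρ x) - (idx x : ℝ)*L)/L := by
            field_simp
          rw [e5]
          have hlogR : Real.log (R (idx x)) = (idx x : ℝ) * L := by
            rw [hRdef]; simp [Real.log_exp]
          have hlog3 : Real.log (ρ x) - (idx x : ℝ)*L ≤ (ρ x - R (idx x))/(R (idx x)) := by
            rw [← hlogR, ← Real.log_div (ne_of_gt hρxpos) (ne_of_gt (hRpos _))]
            have h3 := Real.log_le_sub_one_of_pos (div_pos hρxpos (hRpos (idx x)))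
            have e3 : ρ x / R (idx x) - 1 = (ρ x - R (idx x))/(R (idx x)) := by have hR := (hRpos (idx x)).ne'; field_simp
            linarith
          have hnum : ρ x - R (idx x) ≤ dist x y := by
            have : ρ y ≤ R (idx x) := hρy_lt.le
            linarith
          calc (Real.log (ρ x) - (idx x : ℝ)*L)/L ≤ ((ρ x - R (idx x))/(R (idx x)))/L :=
              (div_le_div_iff_of_pos_right hL0).mpr hlog3
            _ ≤ (dist x y/(R (idx x)))/L :=
              (div_le_div_iff_of_pos_right hL0).mpr ((div_le_div_iff_of_pos_right (hRpos _)).mpr hnum)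
            _ = dist x y / (R (idx x) * L) := by have hR := (hRpos (idx x)).ne'; field_simp
        have hT1norm : ‖T1‖ ≤ (2*C/L) * dist x y := by
          rw [hT1def, norm_smul, Real.norm_eq_abs, abs_of_nonneg (hμ_nonneg x)]
          have hV : ‖G (idx x) y - G (idx x - 1) y‖ ≤ 2*C*ρ y := by
            calc ‖G (idx x) y - G (idx x - 1) y‖ ≤ ‖G (idx x) y‖ + ‖G (idx x - 1) y‖ :=
                norm_sub_le _ _
              _ ≤ C * ρ y + C * ρ y := add_le_add (hval _ y hdomy2) (hval _ y hdomy1)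
              _ = 2*C*ρ y := by ring
          calc μ x * ‖G (idx x) y - G (idx x - 1) y‖
              ≤ (dist x y / (R (idx x) * L)) * (2*C*ρ y) := by
                apply mul_le_mul hμx_le hV (norm_nonneg _) (by positivity)
            _ ≤ (dist x y / (R (idx x) * L)) * (2*C*R (idx x)) := by
                apply mul_le_mul_of_nonneg_left _ (by positivity)
                nlinarith [hρy_lt]
            _ = (2*C/L) * dist x y := by have hR := (hRpos (idx x)).ne'; field_simp
        have hT2norm : ‖T2‖ ≤ (2*C/L) * dist x y := by
          by_cases hk10 : idx x - 1 = 0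
          · have hz : G (idx x - 1) y - G ((idx x - 1) - 1) y = 0 := by
              rw [hk10]; simp
            rw [hT2def, hz, smul_zero, norm_zero]
            positivity
          · have h0y : idx y ≠ 0 := by omega
            have hμy_ge : 1 - μ y ≤ (R (idx x) - ρ y)/(ρ y * L) := by
              rw [hμ_eq y h0y, hjeq]
              have hlogR : Real.log (R (idx x)) = (idx x : ℝ) * L := by
                rw [hRdef]; simp [Real.log_exp]
              have e6 : 1 - (Real.log (ρ y)/L - ((idx x - 1 : ℕ):ℝ))
                  = ((idx x:ℝ)*L - Real.log (ρ y))/L := by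
                rw [hcast]; field_simp; ring
              rw [e6]
              have hlog4 : (idx x:ℝ)*L - Real.log (ρ y) ≤ (R (idx x) - ρ y)/ρ y := by
                rw [← hlogR, ← Real.log_div (ne_of_gt (hRpos _)) (ne_of_gt hρypos)]
                have h3 := Real.log_le_sub_one_of_pos (div_pos (hRpos (idx x)) hρypos)
                have e3 : R (idx x) / ρ y - 1 = (R (idx x) - ρ y)/ρ y := by field_simp
                linarith
              calc ((idx x:ℝ)*L - Real.log (ρ y))/L ≤ ((R (idx x) - ρ y)/ρ y)/L :=
                  (div_le_div_iff_of_pos_right hL0).mpr hlog4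
                _ = (R (idx x) - ρ y)/(ρ y * L) := by field_simp
            have hμy1 : (0:ℝ) ≤ 1 - μ y := by linarith [hμ_le_one y]
            rw [hT2def, norm_smul, Real.norm_eq_abs, abs_of_nonneg hμy1]
            have hV : ‖G (idx x - 1) y - G ((idx x - 1) - 1) y‖ ≤ 2*C*ρ y := by
              calc ‖G (idx x - 1) y - G ((idx x - 1) - 1) y‖
                  ≤ ‖G (idx x - 1) y‖ + ‖G ((idx x - 1) - 1) y‖ := norm_sub_le _ _
                _ ≤ C * ρ y + C * ρ y := add_le_add (hval _ y hdomy1) (hval _ y hdomy0)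
                _ = 2*C*ρ y := by ring
            have hRρ : R (idx x) - ρ y ≤ dist x y := by
              have : R (idx x) ≤ ρ x := hρx_ge
              linarith
            calc (1 - μ y) * ‖G (idx x - 1) y - G ((idx x - 1) - 1) y‖
                ≤ ((R (idx x) - ρ y)/(ρ y * L)) * (2*C*ρ y) :=
                  mul_le_mul hμy_ge hV (norm_nonneg _)
                    (div_nonneg (by linarith [hρy_lt]) (by positivity))
              _ ≤ (dist x y/(ρ y * L)) * (2*C*ρ y) :=
                  mul_le_mul_of_nonneg_right
                    ((div_le_div_iff_of_pos_right (by positivity)).mpr hRρ) (by positivity)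
              _ = (2*C/L) * dist x y := by field_simp
        have hlb : ‖M‖ ≤ ‖f x - f y‖ + (‖T1‖ + ‖T2‖) := by
          have e4 : M = (f x - f y) - (T1 + T2) := by rw [hiden]; abel
          calc ‖M‖ = ‖(f x - f y) - (T1 + T2)‖ := by rw [e4]
            _ ≤ ‖f x - f y‖ + ‖T1 + T2‖ := norm_sub_le _ _
            _ ≤ ‖f x - f y‖ + (‖T1‖ + ‖T2‖) := by
                have := norm_add_le T1 T2; linarith
        have hub : ‖f x - f y‖ ≤ ‖M‖ + (‖T1‖ + ‖T2‖) := by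
          rw [hiden]
          calc ‖M + (T1 + T2)‖ ≤ ‖M‖ + ‖T1 + T2‖ := norm_add_le _ _
            _ ≤ ‖M‖ + (‖T1‖ + ‖T2‖) := by
                have := norm_add_le T1 T2; linarith
        constructor
        · nlinarith [hcomp, hlb, hT1norm, hT2norm, hT1small, hd]
        · nlinarith [hub, hMup, hT1norm, hT2norm, hT1small, hd, mul_pos hCpos hd]
  intro x y
  rcases le_total (ρ y) (ρ x) with h | h
  · exact key x y h
  · obtain ⟨h1, h2⟩ := key y x h
    constructor
    · calc (δ/4) * dist x y = (δ/4) * dist y x := by rw [dist_comm]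
        _ ≤ ‖f y - f x‖ := h1
        _ = ‖f x - f y‖ := by rw [norm_sub_rev]
    · calc ‖f x - f y‖ = ‖f y - f x‖ := by rw [norm_sub_rev]
        _ ≤ 4*C * dist y x := h2
        _ = 4*C * dist x y := by rw [dist_comm]


/-- Extraction over finitely many pairs. -/
lemma extract_many (Bad : (A × A) → ℕ → ℕ → Prop) (W : Finset (A × A)) (S : Set ℕ)
    (hS : S.Infinite)
    (hsymm : ∀ p m n, Bad p m n → Bad p n m)
    (htri : ∀ T : Set ℕ, T ⊆ S → ∀ p ∈ W, ∀ a ∈ T, ∀ b ∈ T, ∀ c ∈ T,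
      a < b → b < c → Bad p a b → Bad p b c → ¬ Bad p a c) :
    ∃ T : Set ℕ, T ⊆ S ∧ T.Infinite ∧
      ∀ p ∈ W, ∀ m ∈ T, ∀ n ∈ T, m ≠ n → ¬ Bad p m n := by
  classical
  induction W using Finset.induction_on with
  | empty => exact ⟨S, subset_rfl, hS, by simp⟩
  | insert p W' hpW ih =>
    obtain ⟨T₁, hT₁S, hT₁inf, hT₁⟩ := ih (fun T hT => by
      intro q hq
      exact htri T hT q (Finset.mem_insert_of_mem hq))
    obtain ⟨T, hTT₁, hTinf, hT⟩ := extract_no_bad (Bad p) T₁ hT₁inf (hsymm p)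
      (fun a ha b hb c hc hab hbc => htri T₁ hT₁S p (Finset.mem_insert_self p W') a ha b hb c hc hab hbc)
    refine ⟨T, hTT₁.trans hT₁S, hTinf, ?_⟩
    intro q hq m hm n hn hmn
    rcases Finset.mem_insert.mp hq with rfl | hq'
    · exact hT m hm n hn hmn
    · exact hT₁ q hq' m (hTT₁ hm) n (hTT₁ hn) hmn


theorem main_theorem
    (hA : MetricLocallyFinite A) (C : ℝ) (hC : 1 ≤ C)
    (hfin : ∀ S : Set A, S.Finite → ∃ f : S → X, IsBilipschitzEmbedding C f) :
    ∃ C' : ℝ, 1 ≤ C' ∧ ∃ f : A → X, IsBilipschitzEmbedding C' f := by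
  classical
  rcases isEmpty_or_nonempty A with hemp | hne
  · exact ⟨1, le_refl 1, fun _ => 0, 1, one_pos, fun u => (hemp.false u).elim⟩
  obtain ⟨O⟩ := hne
  have hCpos : (0:ℝ) < C := by linarith
  set δ : ℝ := (((8:ℝ)*(C+1)^2)⁻¹)^2 with hδdef
  have hδ0 : 0 < δ := by rw [hδdef]; positivity
  have hδ1 : δ ≤ 1 := by
    rw [hδdef]
    have h1 : (1:ℝ) ≤ 8*(C+1)^2 := by nlinarith
    have h2 : ((8:ℝ)*(C+1)^2)⁻¹ ≤ 1 := by
      rw [inv_le_one_iff₀]; right; exact h1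
    have h3 : (0:ℝ) ≤ ((8:ℝ)*(C+1)^2)⁻¹ := by positivity
    nlinarith
  set L : ℝ := 16*C/δ + Real.log (2*C/δ) with hLdef
  have h2Cδ : (1:ℝ) < 2*C/δ := by
    rw [lt_div_iff₀ hδ0]
    nlinarith
  have hlogpos : 0 < Real.log (2*C/δ) := Real.log_pos h2Cδ
  have hL0 : 0 < L := by
    rw [hLdef]; positivity
  have hL2 : 2*C/L ≤ δ/8 := by
    have h1 : 16*C/δ ≤ L := by rw [hLdef]; linarith
    have h2 : (0:ℝ) < 16*C/δ := by positivity
    calc 2*C/L ≤ 2*C/(16*C/δ) := by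
          apply div_le_div_of_nonneg_left (by linarith) h2 h1
      _ = δ/8 := by field_simp; ring
  have hL4 : Real.exp (-L) ≤ δ/(2*C) := by
    have h1 : Real.log (2*C/δ) ≤ L := by
      rw [hLdef]
      have : (0:ℝ) < 16*C/δ := by positivity
      linarith
    calc Real.exp (-L) ≤ Real.exp (-(Real.log (2*C/δ))) := by
          apply Real.exp_le_exp.mpr; linarith
      _ = (2*C/δ)⁻¹ := by rw [Real.exp_neg, Real.exp_log (by linarith : (0:ℝ) < 2*C/δ)]
      _ = δ/(2*C) := by rw [inv_div]
  have hδC2 : δ/(2*C) ≤ 1/2 := by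
    rw [div_le_iff₀ (by linarith : (0:ℝ) < 2*C)]
    nlinarith
  set R : ℕ → ℝ := fun k => Real.exp ((k:ℝ) * L) with hRdef
  have hRpos : ∀ k, 0 < R k := fun k => Real.exp_pos _
  have hRmono : ∀ {k m : ℕ}, k ≤ m → R k ≤ R m := by
    intro k m h
    apply Real.exp_le_exp.mpr
    apply mul_le_mul_of_nonneg_right _ hL0.le
    exact_mod_cast h
  -- normalized embeddings of balls
  have hmaps : ∀ n : ℕ, ∃ g : A → X, GoodOn O C g (R (n+2)) := by
    intro n
    obtain ⟨f, rr, hrr, hprop⟩ := hfin (Metric.closedBall O (R (n+2))) (hA O (R (n+2)))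
    have hO : O ∈ Metric.closedBall O (R (n+2)) := Metric.mem_closedBall_self (hRpos _).le
    refine ⟨fun x => if hx : x ∈ Metric.closedBall O (R (n+2))
      then rr⁻¹ • (f ⟨x, hx⟩ - f ⟨O, hO⟩) else 0, ?_, ?_⟩
    · simp only [dif_pos hO, sub_self, smul_zero]
    · intro x y hx hy
      have hx' : x ∈ Metric.closedBall O (R (n+2)) := Metric.mem_closedBall.mpr hx
      have hy' : y ∈ Metric.closedBall O (R (n+2)) := Metric.mem_closedBall.mpr hy
      simp only [dif_pos hx', dif_pos hy']
      have e1 : rr⁻¹ • (f ⟨x, hx'⟩ - f ⟨O, hO⟩) - rr⁻¹ • (f ⟨y, hy'⟩ - f ⟨O, hO⟩)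
          = rr⁻¹ • (f ⟨x, hx'⟩ - f ⟨y, hy'⟩) := by
        rw [← smul_sub]; congr 1; abel
      rw [e1, norm_smul, Real.norm_eq_abs, abs_of_pos (inv_pos.mpr hrr)]
      have e2 : ‖f ⟨x, hx'⟩ - f ⟨y, hy'⟩‖ = dist (f ⟨x, hx'⟩) (f ⟨y, hy'⟩) := (dist_eq_norm _ _).symm
      rw [e2]
      obtain ⟨hlow, hup⟩ := hprop ⟨x, hx'⟩ ⟨y, hy'⟩
      rw [Subtype.dist_eq] at hlow hup
      simp only at hlow hup
      constructor
      · calc dist x y = rr⁻¹ * (rr * dist x y) := by field_simp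
          _ ≤ rr⁻¹ * dist (f ⟨x, hx'⟩) (f ⟨y, hy'⟩) :=
            mul_le_mul_of_nonneg_left hlow (inv_pos.mpr hrr).le
      · calc rr⁻¹ * dist (f ⟨x, hx'⟩) (f ⟨y, hy'⟩) ≤ rr⁻¹ * (rr * C * dist x y) :=
            mul_le_mul_of_nonneg_left hup (inv_pos.mpr hrr).le
          _ = C * dist x y := by field_simp
  choose h hgood using hmaps
  -- compat for identical maps
  have hself : ∀ (g : A → X) (r : ℝ), GoodOn O C g r → CompatOn O δ g g r := by
    intro g r hg x y hx hy l hl0 hl1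
    have e : l • (g x - g y) + (1 - l) • (g x - g y) = g x - g y := by
      rw [← add_smul]
      norm_num
    rw [e]
    calc δ * dist x y ≤ 1 * dist x y :=
        mul_le_mul_of_nonneg_right (by linarith) dist_nonneg
      _ = dist x y := by ring
      _ ≤ ‖g x - g y‖ := (hg.2 x y hx hy).1
  -- goodness is antitone in the radius
  have hmono' : ∀ (g : A → X) (r r' : ℝ), r' ≤ r → GoodOn O C g r → GoodOn O C g r' :=
    fun g r r' hrr hg => ⟨hg.1, fun x y hx hy => hg.2 x y (hx.trans hrr) (hy.trans hrr)⟩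
  -- the Bad relation
  set Bad : (A × A) → ℕ → ℕ → Prop := fun p m n =>
    ∃ l : ℝ, 0 ≤ l ∧ l ≤ 1 ∧
      ‖l • (h m p.1 - h m p.2) + (1 - l) • (h n p.1 - h n p.2)‖ < δ * dist p.1 p.2
    with hBaddef
  have hBsymm : ∀ p m n, Bad p m n → Bad p n m := by
    intro p m n ⟨l, hl0, hl1, hl⟩
    refine ⟨1 - l, by linarith, by linarith, ?_⟩
    have e : (1 - (1 - l)) = l := by ring
    rw [e, add_comm]
    exact hl
  -- the key step producing each level of the chain
  have hstep : ∀ (j : ℕ) (S : Set ℕ), S.Infinite → ∃ T, T ⊆ S ∧ T.Infinite ∧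
      (∀ n ∈ T, j ≤ n) ∧
      (∀ m ∈ T, ∀ n ∈ T, m ≠ n → CompatOn O δ (h m) (h n) (R (j+1))) := by
    intro j S hS
    have hS' : (S ∩ {n | j ≤ n}).Infinite := by
      have hsub : S \ {n | n < j} ⊆ S ∩ {n | j ≤ n} := by
        intro n hn
        exact ⟨hn.1, by simpa using hn.2⟩
      apply Set.Infinite.mono hsub
      apply hS.diff
      have : {n : ℕ | n < j} ⊆ Set.Iic j := fun n hn => Set.mem_Iic.mpr (le_of_lt hn)
      exact (Set.finite_Iic j).subset this
    set WF : Finset A := (hA O (R (j+1))).toFinset with hWFdef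
    have htri : ∀ T : Set ℕ, T ⊆ S ∩ {n | j ≤ n} → ∀ p ∈ WF ×ˢ WF, ∀ a ∈ T, ∀ b ∈ T, ∀ c ∈ T,
        a < b → b < c → Bad p a b → Bad p b c → ¬ Bad p a c := by
      intro T hT p hp a ha b hb c hc hab hbc hBab hBbc
      obtain ⟨hp1, hp2⟩ := Finset.mem_product.mp hp
      rw [hWFdef, Set.Finite.mem_toFinset] at hp1 hp2
      have hd : 0 < dist p.1 p.2 := by
        obtain ⟨l, hl0, hl1, hl⟩ := hBab
        by_contra hc'
        push_neg at hc'
        have : dist p.1 p.2 = 0 := le_antisymm hc' dist_nonneg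
        rw [this, mul_zero] at hl
        exact absurd hl (not_lt.mpr (norm_nonneg _))
      have hnorms : ∀ m : ℕ, m ∈ T → (dist p.1 p.2 ≤ ‖h m p.1 - h m p.2‖ ∧
          ‖h m p.1 - h m p.2‖ ≤ C * dist p.1 p.2) := by
        intro m hm
        have hmj : j ≤ m := (hT hm).2
        have hrad : R (j+1) ≤ R (m+2) := hRmono (by omega)
        exact (hgood m).2 p.1 p.2 (le_trans hp1 hrad) (le_trans hp2 hrad)
      obtain ⟨ha1, ha2⟩ := hnorms a ha
      obtain ⟨hb1, hb2⟩ := hnorms b hb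
      obtain ⟨hc1, hc2⟩ := hnorms c hc
      intro hBac
      obtain ⟨l, hl0, hl1, hl⟩ := hBac
      have := three_map C δ (dist p.1 p.2) hC hδdef hd _ _ _ ha1 ha2 hb1 hb2 hc1 hc2
        hBab hBbc l hl0 hl1
      linarith
    obtain ⟨T, hTsub, hTinf, hT⟩ := extract_many Bad (WF ×ˢ WF) (S ∩ {n | j ≤ n}) hS' hBsymm htri
    refine ⟨T, fun n hn => (hTsub hn).1, hTinf, fun n hn => (hTsub hn).2, ?_⟩
    intro m hm n hn hmn x y hx hy l hl0 hl1
    have hp : (x, y) ∈ WF ×ˢ WF := by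
      rw [Finset.mem_product, hWFdef, Set.Finite.mem_toFinset, Set.Finite.mem_toFinset]
      exact ⟨hx, hy⟩
    have hnb := hT (x, y) hp m hm n hn hmn
    simp only [hBaddef] at hnb
    push_neg at hnb
    exact hnb l hl0 hl1
  -- build the nested chain of index sets
  have key2 : ∀ (j : ℕ) (Sp : {T : Set ℕ // T.Infinite ∧ (∀ n ∈ T, j ≤ n) ∧
      (∀ m ∈ T, ∀ n ∈ T, m ≠ n → CompatOn O δ (h m) (h n) (R (j+1)))}),
      ∃ q : {T : Set ℕ // T.Infinite ∧ (∀ n ∈ T, (j+1) ≤ n) ∧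
        (∀ m ∈ T, ∀ n ∈ T, m ≠ n → CompatOn O δ (h m) (h n) (R (j+2)))}, q.1 ⊆ Sp.1 := by
    intro j Sp
    obtain ⟨T, hTsub, hTinf, hTge, hTcomp⟩ := hstep (j+1) Sp.1 Sp.2.1
    exact ⟨⟨T, hTinf, hTge, hTcomp⟩, hTsub⟩
  obtain ⟨T0, hT0sub, hT0inf, hT0ge, hT0comp⟩ := hstep 0 Set.univ Set.infinite_univ
  let P : ℕ → Type _ := fun j => {T : Set ℕ // T.Infinite ∧ (∀ n ∈ T, j ≤ n) ∧
      (∀ m ∈ T, ∀ n ∈ T, m ≠ n → CompatOn O δ (h m) (h n) (R (j+1)))}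
  let nstep : ∀ j, P j → P (j+1) := fun j Sp => Classical.choose (key2 j Sp)
  have hnstep : ∀ j Sp, (nstep j Sp).1 ⊆ Sp.1 := fun j Sp => Classical.choose_spec (key2 j Sp)
  let NN : ∀ j : ℕ, P j := fun j => Nat.rec ⟨T0, hT0inf, hT0ge, hT0comp⟩ nstep j
  have hNNsub : ∀ j, (NN (j+1)).1 ⊆ (NN j).1 := fun j => hnstep j (NN j)
  have hNNnest : ∀ i j : ℕ, i ≤ j → (NN j).1 ⊆ (NN i).1 := by
    intro i j hij
    induction j with
    | zero =>
      have h0 : i = 0 := Nat.le_zero.mp hij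
      subst h0; exact subset_rfl
    | succ j ih =>
      rcases Nat.lt_or_ge i (j+1) with hlt | hge
      · exact (hNNsub j).trans (ih (Nat.lt_succ_iff.mp hlt))
      · have : i = j + 1 := le_antisymm hij hge
        subst this; exact subset_rfl
  -- pick one index from each level
  let n : ℕ → ℕ := fun k => ((NN (k+1)).2.1.nonempty).choose
  have hn_mem : ∀ k, n k ∈ (NN (k+1)).1 := fun k => ((NN (k+1)).2.1.nonempty).choose_spec
  have hn_ge : ∀ k, k + 1 ≤ n k := fun k => (NN (k+1)).2.2.1 (n k) (hn_mem k)
  -- the chain of maps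
  set G : ℕ → A → X := fun k => h (n k) with hGdef
  have hGmaster : ∀ k : ℕ, GoodOn O C (G k) (Real.exp (((k:ℝ)+2) * L)) := by
    intro k
    have e : Real.exp (((k:ℝ)+2) * L) = R (k+2) := by
      rw [hRdef]; push_cast; ring_nf
    rw [e]
    apply hmono' _ (R (n k + 2)) _ (hRmono (by have := hn_ge k; omega)) (hgood (n k))
  have hWmaster : ∀ k : ℕ, CompatOn O δ (G k) (G (k+1)) (Real.exp (((k:ℝ)+2) * L)) := by
    intro k
    have e : Real.exp (((k:ℝ)+2) * L) = R (k+2) := by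
      rw [hRdef]; push_cast; ring_nf
    rw [e]
    by_cases heq : n k = n (k+1)
    · rw [hGdef]
      simp only [heq]
      apply hself _ _ (hmono' _ (R (n (k+1) + 2)) _ (hRmono (by have := hn_ge (k+1); omega))
        (hgood (n (k+1))))
    · have hm1 : n k ∈ (NN (k+1)).1 := hn_mem k
      have hm2 : n (k+1) ∈ (NN (k+1)).1 := hNNnest (k+1) (k+2) (by omega) (hn_mem (k+1))
      have := (NN (k+1)).2.2.2 (n k) hm1 (n (k+1)) hm2 heq
      exact this
  obtain ⟨f, hf⟩ := master O C δ L hC hδ0 hδ1 hL0 hL2 hL4 hδC2 G hGmaster hWmaster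
  refine ⟨16*C/δ, ?_, f, δ/4, by positivity, ?_⟩
  · rw [le_div_iff₀ hδ0]
    nlinarith
  · intro u v
    obtain ⟨hlo, hhi⟩ := hf u v
    rw [dist_eq_norm]
    constructor
    · exact hlo
    · have e : δ/4 * (16*C/δ) = 4*C := by field_simp; ring
      rw [e]
      exact hhi

end FinDet

theorem finite_determination_of_bilipschitz_embeddability
    {A X : Type*} [MetricSpace A]
    [NormedAddCommGroup X] [NormedSpace ℝ X] [CompleteSpace X]
    (hA : MetricLocallyFinite A) (C : ℝ) (hC : 1 ≤ C)
    (hfin : ∀ S : Set A, S.Finite → ∃ f : S → X, IsBilipschitzEmbedding C f) :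
    ∃ C' : ℝ, 1 ≤ C' ∧ ∃ f : A → X, IsBilipschitzEmbedding C' f :=
  FinDet.main_theorem hA C hC hfin
end

section
/- Let X be a strictly convex Banach space such that every finite subset of ℓ_2 admits an isometric embedding into X, but no closed linear subspace of X is isomorphic (linearly homeomorphic) to ℓ_2. Then there exists a locally finite metric space M such that every finite subset of M admits an isometric embedding into X, yet M itself admits no isometric embedding into X. -/
open scoped ENNReal

noncomputable section
open Finset
open scoped ENNReal

abbrev Hl2 : Type := lp (fun _ : ℕ => ℝ) 2

namespace SCNE

/-- element of lp from a finitely supported function -/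
def fso (g : ℕ → ℝ) (h : {i | g i ≠ 0}.Finite) : Hl2 :=
  ⟨g, ((memℓp_zero h).of_exponent_ge (zero_le : (0:ℝ≥0∞) ≤ 2) : Memℓp g 2)⟩

@[simp] lemma fso_apply (g : ℕ → ℝ) (h) (i : ℕ) : (fso g h) i = g i := rfl

/-- lattice point at scale 2^s with integer coordinates w -/
def pt (s : ℕ) (w : ℕ →₀ ℤ) : Hl2 :=
  fso (fun i => (w i : ℝ) * 2 ^ s)
    (Set.Finite.subset w.support.finite_toSet (by
      intro i hi
      simp only [Set.mem_setOf_eq, ne_eq, mul_eq_zero] at hi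
      push_neg at hi
      simpa using Int.cast_ne_zero.mp hi.1))

@[simp] lemma pt_apply (s : ℕ) (w : ℕ →₀ ℤ) (i : ℕ) : (pt s w) i = (w i : ℝ) * 2 ^ s := rfl

lemma pt_add (s : ℕ) (w w' : ℕ →₀ ℤ) : pt s (w + w') = pt s w + pt s w' := by
  apply lp.ext
  rw [lp.coeFn_add]
  funext i
  simp [pt, Pi.add_apply, Finsupp.add_apply]
  push_cast
  ring

@[simp] lemma pt_zero (s : ℕ) : pt s 0 = 0 := by
  apply lp.ext
  rw [lp.coeFn_zero]
  funext i
  simp [pt]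

lemma pt_neg (s : ℕ) (w : ℕ →₀ ℤ) : pt s (-w) = - pt s w := by
  apply lp.ext
  rw [lp.coeFn_neg]
  funext i
  simp [pt]

lemma pt_midpoint (s : ℕ) (w w' : ℕ →₀ ℤ) :
    midpoint ℝ (pt (s+1) w) (pt (s+1) w') = pt s (w + w') := by
  apply lp.ext
  rw [midpoint_eq_smul_add, lp.coeFn_smul, lp.coeFn_add]
  funext i
  simp only [Pi.smul_apply, Pi.add_apply, pt_apply, Finsupp.add_apply, smul_eq_mul, invOf_eq_inv]
  push_cast
  ring

lemma pt_double (s : ℕ) (w : ℕ →₀ ℤ) : pt s w + pt s w = pt (s+1) w := by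
  apply lp.ext
  rw [lp.coeFn_add]
  funext i
  simp only [Pi.add_apply, pt_apply]
  ring

lemma normsq_eq_sum (x : Hl2) (n : ℕ) (hx : ∀ i, n ≤ i → x i = 0) :
    ‖x‖ ^ 2 = ∑ i ∈ Finset.range n, (x i) ^ 2 := by
  have hp : 0 < (2 : ℝ≥0∞).toReal := by norm_num
  have h := lp.hasSum_norm hp x
  have h2 : HasSum (fun i => (x i) ^ 2) (‖x‖ ^ 2) := by
    convert h using 2 with i
    · rw [show ((2:ℝ≥0∞).toReal) = ((2:ℕ):ℝ) by norm_num, Real.rpow_natCast,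
        Real.norm_eq_abs, sq_abs]
    · rw [show ((2:ℝ≥0∞).toReal) = ((2:ℕ):ℝ) by norm_num, Real.rpow_natCast]
  have h3 : HasSum (fun i => (x i) ^ 2) (∑ i ∈ Finset.range n, (x i) ^ 2) := by
    apply hasSum_sum_of_ne_finset_zero
    intro i hi
    rw [hx i (by simpa using hi)]
    simp
  exact h2.unique h3

end SCNE

namespace SCNE2
open SCNE

/-- scale-n piece of the locally finite set -/
def Sset (n : ℕ) : Set Hl2 :=
  { x | (∀ i, ∃ k : ℤ, x i = (k : ℝ) * 2 ^ n) ∧ (∀ i, |x i| ≤ 2 * 8 ^ n) ∧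
      (∀ i, n ≤ i → x i = 0) }

def Mset : Set Hl2 := ⋃ n, Sset n

lemma zero_mem_Sset (n : ℕ) : (0 : Hl2) ∈ Sset n := by
  refine ⟨fun i => ⟨0, by simp⟩, fun i => ?_, fun i _ => by simp [lp.coeFn_zero]⟩
  rw [lp.coeFn_zero, Pi.zero_apply, abs_zero]
  positivity

lemma zero_mem_Mset : (0 : Hl2) ∈ Mset := Set.mem_iUnion.2 ⟨0, zero_mem_Sset 0⟩

lemma mem_Mset_of_Sset {x : Hl2} {n : ℕ} (h : x ∈ Sset n) : x ∈ Mset := Set.mem_iUnion.2 ⟨n, h⟩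

lemma pow8 (n : ℕ) : 2 * (8:ℕ) ^ n = 4 ^ n * 2 ^ (n+1) := by
  rw [show (8:ℕ) = 4 * 2 by norm_num, mul_pow, pow_succ]
  ring

lemma pt_mem_Sset {w : ℕ →₀ ℤ} {s n : ℕ} (hs : n ≤ s)
    (hsupp : ∀ i, w i ≠ 0 → i < n)
    (hb : ∀ i, (w i).natAbs * 2 ^ s ≤ 2 * 8 ^ n) : pt s w ∈ Sset n := by
  refine ⟨fun i => ⟨w i * 2 ^ (s - n), ?_⟩, fun i => ?_, fun i hi => ?_⟩
  · rw [pt_apply]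
    push_cast
    rw [mul_assoc, ← pow_add, Nat.sub_add_cancel hs]
  · have h2 : (((w i).natAbs * 2 ^ s : ℕ) : ℝ) ≤ ((2 * 8 ^ n : ℕ) : ℝ) := by
      exact_mod_cast hb i
    push_cast at h2
    rw [pt_apply, abs_mul, abs_pow, abs_two]
    rw [Nat.cast_natAbs] at h2
    push_cast at h2 ⊢; linarith
  · have : w i = 0 := by
      by_contra h
      exact absurd (hsupp i h) (by omega)
    simp [this]

lemma neg_mem_Sset {x : Hl2} {n : ℕ} (h : x ∈ Sset n) : -x ∈ Sset n := by
  obtain ⟨h1, h2, h3⟩ := h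
  refine ⟨fun i => ?_, fun i => ?_, fun i hi => ?_⟩
  · obtain ⟨k, hk⟩ := h1 i
    exact ⟨-k, by rw [lp.coeFn_neg, Pi.neg_apply, hk]; push_cast; ring⟩
  · rw [lp.coeFn_neg, Pi.neg_apply, abs_neg]; exact h2 i
  · rw [lp.coeFn_neg, Pi.neg_apply, h3 i hi, neg_zero]

lemma Sset_finite (n : ℕ) : (Sset n).Finite := by
  classical
  set Φ : Hl2 → (Fin n → ℝ) := fun x => (fun i => x i) with hΦ
  have hinj : Set.InjOn Φ (Sset n) := by
    intro x hx y hy hxy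
    apply lp.ext
    funext i
    by_cases hi : i < n
    · exact congrFun hxy ⟨i, hi⟩
    · rw [hx.2.2 i (by omega), hy.2.2 i (by omega)]
  apply Set.Finite.of_finite_image ?_ hinj
  have hT : (Set.image (fun k : ℤ => (k : ℝ) * 2 ^ n) (Set.Icc (-(2*4^n) : ℤ) (2*4^n))).Finite :=
    Set.Finite.image _ (Set.finite_Icc _ _)
  apply Set.Finite.subset (Set.Finite.pi (fun _ : Fin n => hT))
  rintro u ⟨x, hx, rfl⟩
  intro i _
  obtain ⟨k, hk⟩ := hx.1 i
  refine ⟨k, ?_, hk.symm⟩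
  have hb := hx.2.1 i
  rw [hk, abs_mul, abs_pow, abs_two] at hb
  have h2 : |(k:ℝ)| ≤ 2 * 4 ^ n := by
    have hpow : (0:ℝ) < 2 ^ n := by positivity
    rw [show (8:ℝ) = 4 * 2 by norm_num, mul_pow] at hb
    calc |(k:ℝ)| = |(k:ℝ)| * 2 ^ n / 2 ^ n := by field_simp
    _ ≤ 2 * (4 ^ n * 2 ^ n) / 2 ^ n := by gcongr
    _ = 2 * 4 ^ n := by field_simp
  constructor
  · have : -(2 * 4 ^ n : ℝ) ≤ (k : ℝ) := by
      have := abs_le.mp h2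
      exact_mod_cast this.1
    exact_mod_cast this
  · have := (abs_le.mp h2).2
    exact_mod_cast this

lemma norm_ge_of_mem_Sset {x : Hl2} {n : ℕ} (hx : x ∈ Sset n) (hne : x ≠ 0) :
    (2:ℝ) ^ n ≤ ‖x‖ := by
  have : ∃ i, x i ≠ 0 := by
    by_contra h
    push_neg at h
    exact hne (by apply lp.ext; funext i; rw [h i]; simp [lp.coeFn_zero])
  obtain ⟨i, hi⟩ := this
  obtain ⟨k, hk⟩ := hx.1 i
  have hk0 : k ≠ 0 := by
    rintro rfl
    simp at hk
    exact hi hk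
  have h1 : (2:ℝ) ^ n ≤ |x i| := by
    rw [hk, abs_mul, abs_pow, abs_two]
    have : (1:ℝ) ≤ |(k:ℝ)| := by
      rw [← Int.cast_abs]
      exact_mod_cast Int.one_le_abs hk0
    nlinarith [pow_pos (show (0:ℝ) < 2 by norm_num) n]
  calc (2:ℝ)^n ≤ |x i| := h1
  _ = ‖x i‖ := (Real.norm_eq_abs _).symm
  _ ≤ ‖x‖ := lp.norm_apply_le_norm (by norm_num) x i

lemma locallyFinite_M : ∀ (x : ↥Mset) (R : ℝ), (Metric.closedBall x R).Finite := by
  intro x R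
  obtain ⟨N, hN⟩ := pow_unbounded_of_one_lt (R + ‖(x : Hl2)‖) (by norm_num : (1:ℝ) < 2)
  have hfin : ((⋃ m ∈ Finset.range N, Sset m) ∪ {(0:Hl2)}).Finite := by
    apply Set.Finite.union
    · exact Set.Finite.biUnion (Finset.range N).finite_toSet (fun m _ => Sset_finite m)
    · exact Set.finite_singleton _
  have key : Subtype.val '' (Metric.closedBall x R) ⊆
      (⋃ m ∈ Finset.range N, Sset m) ∪ {(0:Hl2)} := by
    rintro _ ⟨z, hz, rfl⟩
    obtain ⟨m, hm⟩ := Set.mem_iUnion.1 z.2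
    by_cases h0 : (z : Hl2) = 0
    · exact Or.inr h0
    · left
      have hdist : dist (z : Hl2) (x : Hl2) ≤ R := by
        rw [← Subtype.dist_eq]
        exact Metric.mem_closedBall.1 hz
      have hnorm : ‖(z : Hl2)‖ ≤ R + ‖(x : Hl2)‖ := by
        calc ‖(z : Hl2)‖ = dist (z : Hl2) 0 := by rw [dist_zero_right]
        _ ≤ dist (z : Hl2) (x : Hl2) + dist (x : Hl2) 0 := dist_triangle _ _ _
        _ ≤ R + ‖(x : Hl2)‖ := by rw [dist_zero_right]; gcongr
      have hmN : m < N := by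
        by_contra hc
        push_neg at hc
        have h1 : (2:ℝ) ^ m ≤ ‖(z : Hl2)‖ := norm_ge_of_mem_Sset hm h0
        have h2 : (2:ℝ) ^ N ≤ (2:ℝ) ^ m := pow_le_pow_right₀ (by norm_num) hc
        linarith
      exact Set.mem_biUnion (Finset.mem_range.2 hmN) hm
  exact Set.Finite.of_finite_image (hfin.subset key)
    (Set.injOn_of_injective Subtype.val_injective)

section Embed

variable {X : Type*} [NormedAddCommGroup X] [NormedSpace ℝ X] [StrictConvexSpace ℝ X]

open Classical in
/-- extend an isometry on Mset to all of Hl2 by zero -/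
noncomputable def Fm (f : ↥Mset → X) : Hl2 → X :=
  fun z => if h : z ∈ Mset then f ⟨z, h⟩ else 0

lemma Fm_dist {f : ↥Mset → X} (hf : Isometry f) {z w : Hl2}
    (hz : z ∈ Mset) (hw : w ∈ Mset) : dist (Fm f z) (Fm f w) = dist z w := by
  rw [Fm, dif_pos hz, Fm, dif_pos hw, hf.dist_eq, Subtype.dist_eq]

lemma Fm_midpoint {f : ↥Mset → X} (hf : Isometry f) {a b m : Hl2}
    (ha : a ∈ Mset) (hb : b ∈ Mset) (hm : m ∈ Mset) (hmid : m = midpoint ℝ a b) :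
    Fm f m = midpoint ℝ (Fm f a) (Fm f b) := by
  apply eq_midpoint_of_dist_eq_half
  · rw [Fm_dist hf ha hm, Fm_dist hf ha hb, hmid, dist_left_midpoint]
    rw [show ‖(2:ℝ)‖ = 2 by norm_num]
    ring
  · rw [Fm_dist hf hm hb, Fm_dist hf ha hb, hmid, dist_midpoint_right]
    rw [show ‖(2:ℝ)‖ = 2 by norm_num]
    ring

/-- the embedding, translated to map 0 to 0 -/
noncomputable def Lm (f : ↥Mset → X) : Hl2 → X := fun z => Fm f z - Fm f 0

lemma Lm_zero (f : ↥Mset → X) : Lm f 0 = 0 := sub_self _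

lemma Lm_norm {f : ↥Mset → X} (hf : Isometry f) {z : Hl2} (hz : z ∈ Mset) :
    ‖Lm f z‖ = ‖z‖ := by
  rw [Lm, ← dist_eq_norm, Fm_dist hf hz zero_mem_Mset, dist_zero_right]

lemma Lm_add {f : ↥Mset → X} (hf : Isometry f) {u v : Hl2}
    (hu : u ∈ Mset) (hv : v ∈ Mset) (huv : u + v ∈ Mset)
    (hm : midpoint ℝ u v ∈ Mset) : Lm f (u + v) = Lm f u + Lm f v := by
  have h1 : Fm f (midpoint ℝ u v) = midpoint ℝ (Fm f u) (Fm f v) :=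
    Fm_midpoint hf hu hv hm rfl
  have h2 : Fm f (midpoint ℝ u v) = midpoint ℝ (Fm f 0) (Fm f (u + v)) :=
    Fm_midpoint hf zero_mem_Mset huv hm (by rw [midpoint_eq_smul_add, midpoint_eq_smul_add,
      zero_add])
  have h3 : midpoint ℝ (Fm f u) (Fm f v) = midpoint ℝ (Fm f 0) (Fm f (u + v)) := by
    rw [← h1, h2]
  rw [midpoint_eq_smul_add, midpoint_eq_smul_add] at h3
  have h4 := congrArg (fun y : X => (2:ℝ) • y) h3
  simp only [smul_smul, invOf_eq_inv] at h4
  rw [mul_inv_cancel₀ (by norm_num : (2:ℝ) ≠ 0), one_smul, one_smul] at h4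
  simp only [Lm]
  have h5 : Fm f (u+v) = Fm f u + Fm f v - Fm f 0 := by
    rw [eq_sub_iff_add_eq, h4]
    abel
  rw [h5]
  abel

lemma Lm_neg {f : ↥Mset → X} (hf : Isometry f) {u : Hl2} {n : ℕ}
    (hu : u ∈ Sset n) : Lm f (-u) = - Lm f u := by
  have h := Lm_add hf (mem_Mset_of_Sset hu) (mem_Mset_of_Sset (neg_mem_Sset hu))
    (by rw [add_neg_cancel]; exact zero_mem_Mset)
    (by rw [midpoint_self_neg]; exact zero_mem_Mset)
  rw [add_neg_cancel, Lm_zero] at h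
  exact eq_neg_of_add_eq_zero_right h.symm
lemma bound_step (n : ℕ) (a : ℕ) (ha : a ≤ 4 ^ n) : a * 2 ^ (n+1) ≤ 2 * 8 ^ n := by
  rw [pow8]
  exact Nat.mul_le_mul_right _ ha

lemma single_mem_prep {j n : ℕ} (hj : j < n) (σ : ℤ) (hσ : σ.natAbs ≤ 1) :
    pt (n+1) (Finsupp.single j σ) ∈ Sset n := by
  apply pt_mem_Sset (Nat.le_succ n)
  · intro i hi
    have : i = j := by
      by_contra hne
      rw [Finsupp.single_eq_of_ne' (Ne.symm hne)] at hi
      exact hi rfl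
    omega
  · intro i
    apply bound_step
    by_cases hij : i = j
    · subst hij
      rw [Finsupp.single_eq_same]
      calc σ.natAbs ≤ 1 := hσ
      _ ≤ 4 ^ n := Nat.one_le_pow _ _ (by norm_num)
    · rw [Finsupp.single_eq_of_ne' (Ne.symm hij)]
      simp

lemma main_ind {f : ↥Mset → X} (hf : Isometry f) (n : ℕ) :
    ∀ C : ℕ, ∀ w : ℕ →₀ ℤ, (∑ i ∈ Finset.range n, (w i).natAbs) ≤ C →
    (∀ i, w i ≠ 0 → i < n) → (∀ i, (w i).natAbs ≤ 4 ^ n) →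
    Lm f (pt (n+1) w) =
      ∑ i ∈ Finset.range n, ((w i : ℝ)) • Lm f (pt (n+1) (Finsupp.single i 1)) := by
  intro C
  induction C with
  | zero =>
    intro w hw hsupp _
    have hw0 : w = 0 := by
      ext i
      simp only [Finsupp.coe_zero, Pi.zero_apply]
      by_cases hi : i < n
      · have := Finset.sum_eq_zero_iff.1 (Nat.le_zero.1 hw) i (Finset.mem_range.2 hi)
        omega
      · by_contra h
        exact hi (hsupp i h)
    subst hw0
    rw [pt_zero, Lm_zero]
    symm
    apply Finset.sum_eq_zero
    intro i _
    simp
  | succ C ih =>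
    intro w hw hsupp hb
    by_cases hw0 : w = 0
    · subst hw0
      rw [pt_zero, Lm_zero]
      symm
      apply Finset.sum_eq_zero
      intro i _
      simp
    · obtain ⟨j, hj⟩ := Finsupp.support_nonempty_iff.2 hw0
      have hjne : w j ≠ 0 := Finsupp.mem_support_iff.1 hj
      have hjn : j < n := hsupp j hjne
      have hjmem : j ∈ Finset.range n := Finset.mem_range.2 hjn
      set σ : ℤ := if 0 < w j then 1 else -1 with hσdef
      have hσabs : σ.natAbs ≤ 1 := by rw [hσdef]; split <;> simp
      set w' : ℕ →₀ ℤ := w - Finsupp.single j σ with hw'def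
      have hw'j : w' j = w j - σ := by
        rw [hw'def, Finsupp.sub_apply, Finsupp.single_eq_same]
      have hw'i : ∀ i, i ≠ j → w' i = w i := by
        intro i hi
        rw [hw'def, Finsupp.sub_apply, Finsupp.single_eq_of_ne' (Ne.symm hi), sub_zero]
      have hnatj : (w' j).natAbs = (w j).natAbs - 1 ∧ 1 ≤ (w j).natAbs := by
        constructor
        · rw [hw'j, hσdef]
          split <;> rename_i h <;> omega
        · omega
      have hsupp' : ∀ i, w' i ≠ 0 → i < n := by
        intro i hi
        by_cases hij : i = j
        · omega
        · exact hsupp i (by rw [← hw'i i hij]; exact hi)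
      have hb' : ∀ i, (w' i).natAbs ≤ 4 ^ n := by
        intro i
        by_cases hij : i = j
        · subst hij
          have := hb i
          omega
        · rw [hw'i i hij]; exact hb i
      have hsum' : (∑ i ∈ Finset.range n, (w' i).natAbs) ≤ C := by
        rw [← Finset.add_sum_erase _ _ hjmem] at hw ⊢
        have he : ∑ i ∈ (Finset.range n).erase j, (w' i).natAbs
            = ∑ i ∈ (Finset.range n).erase j, (w i).natAbs := by
          apply Finset.sum_congr rfl
          intro i hi
          rw [hw'i i (Finset.ne_of_mem_erase hi)]
        rw [he]
        omega
      have hwsum : w' + Finsupp.single j σ = w := by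
        rw [hw'def]; abel
      -- memberships
      have hmemu : pt (n+1) w' ∈ Mset := mem_Mset_of_Sset
        (pt_mem_Sset (Nat.le_succ n) hsupp' (fun i => bound_step n _ (hb' i)))
      have hmemvS : pt (n+1) (Finsupp.single j σ) ∈ Sset n := single_mem_prep hjn σ hσabs
      have hmemv : pt (n+1) (Finsupp.single j σ) ∈ Mset := mem_Mset_of_Sset hmemvS
      have hmemuv : pt (n+1) w' + pt (n+1) (Finsupp.single j σ) ∈ Mset := by
        rw [← pt_add, hwsum]
        exact mem_Mset_of_Sset
          (pt_mem_Sset (Nat.le_succ n) hsupp (fun i => bound_step n _ (hb i)))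
      have hmemmid : midpoint ℝ (pt (n+1) w') (pt (n+1) (Finsupp.single j σ)) ∈ Mset := by
        rw [pt_midpoint, hwsum]
        apply mem_Mset_of_Sset (pt_mem_Sset (le_refl n) hsupp ?_)
        intro i
        calc (w i).natAbs * 2 ^ n ≤ 4 ^ n * 2 ^ n := Nat.mul_le_mul_right _ (hb i)
        _ ≤ 2 * 8 ^ n := by rw [pow8, pow_succ]; ring_nf; omega
      have hadd := Lm_add hf hmemu hmemv hmemuv hmemmid
      rw [← pt_add, hwsum] at hadd
      -- value of the single term
      have hval : Lm f (pt (n+1) (Finsupp.single j σ)) =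
          (σ : ℝ) • Lm f (pt (n+1) (Finsupp.single j 1)) := by
        rw [hσdef]
        split
        · simp
        · rw [show Finsupp.single j (-1 : ℤ) = -Finsupp.single j 1 by
            rw [← Finsupp.single_neg], pt_neg,
            Lm_neg hf (single_mem_prep hjn 1 (by norm_num))]
          push_cast
          rw [neg_one_smul]
      rw [hadd, ih w' hsum' hsupp' hb', hval]
      -- final sum manipulation
      have hsplit : ∀ i ∈ Finset.range n, ((w i : ℝ)) • Lm f (pt (n+1) (Finsupp.single i 1))
          = ((w' i : ℝ)) • Lm f (pt (n+1) (Finsupp.single i 1))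
            + ((Finsupp.single j σ i : ℝ)) • Lm f (pt (n+1) (Finsupp.single i 1)) := by
        intro i _
        rw [← add_smul, ← Int.cast_add, ← Finsupp.add_apply, hwsum]
      rw [Finset.sum_congr rfl hsplit, Finset.sum_add_distrib]
      congr 1
      rw [Finset.sum_eq_single_of_mem j hjmem]
      · rw [Finsupp.single_eq_same]
      · intro i _ hij
        rw [Finsupp.single_eq_of_ne' (Ne.symm hij)]
        simp

/-- basis-like points: coordinate 2^(n+1) at position i -/
def Ept (n i : ℕ) : Hl2 := pt (n+1) (Finsupp.single i 1)

lemma two_pow_le_eight_pow {n : ℕ} (hn : 1 ≤ n) : 2 ^ (n+1) ≤ 8 ^ n := by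
  rw [show (8:ℕ) = 2 ^ 3 by norm_num, ← pow_mul]
  exact Nat.pow_le_pow_right (by norm_num) (by omega)

lemma Lm_E_succ {f : ↥Mset → X} (hf : Isometry f) {n i : ℕ} (hn : 1 ≤ n) (hi : i < n) :
    Lm f (Ept (n+1) i) = (2:ℝ) • Lm f (Ept n i) := by
  have hu : pt (n+1) (Finsupp.single i 1) ∈ Sset n := single_mem_prep hi 1 (by norm_num)
  have huv : pt (n+1) (Finsupp.single i 1) + pt (n+1) (Finsupp.single i 1) ∈ Mset := by
    rw [pt_double]
    apply mem_Mset_of_Sset (n := n)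
    apply pt_mem_Sset (by omega)
    · intro k hk
      by_contra hc
      rw [Finsupp.single_eq_of_ne' (by omega)] at hk
      exact hk rfl
    · intro k
      by_cases hik : k = i
      · subst hik
        rw [Finsupp.single_eq_same]
        simp only [Int.natAbs_one, one_mul]
        calc (2:ℕ)^(n+1+1) = 2 * 2^(n+1) := by ring
        _ ≤ 2 * 8^n := Nat.mul_le_mul_left 2 (two_pow_le_eight_pow hn)
      · rw [Finsupp.single_eq_of_ne' (Ne.symm hik)]
        simp
  have hmid : midpoint ℝ (pt (n+1) (Finsupp.single i 1)) (pt (n+1) (Finsupp.single i 1))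
      ∈ Mset := by
    rw [midpoint_self]
    exact mem_Mset_of_Sset hu
  have h := Lm_add hf (mem_Mset_of_Sset hu) (mem_Mset_of_Sset hu) huv hmid
  rw [pt_double] at h
  rw [Ept, show n+1+1 = n+2 from rfl, h, Ept, two_smul]

/-- the candidate orthonormal images -/
noncomputable def vE (f : ↥Mset → X) (i : ℕ) : X :=
  ((2:ℝ) ^ (i+2))⁻¹ • Lm f (Ept (i+1) i)

lemma Lm_E {f : ↥Mset → X} (hf : Isometry f) :
    ∀ n i, i < n → Lm f (Ept n i) = (2:ℝ) ^ (n+1) • vE f i := by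
  intro n
  induction n with
  | zero => omega
  | succ m ih =>
    intro i hi
    rcases Nat.lt_succ_iff_lt_or_eq.1 hi with him | him
    · rw [Lm_E_succ hf (by omega) him, ih i him, smul_smul]
      congr 1
      ring
    · subst him
      rw [vE, smul_inv_smul₀ (by positivity)]

/-- finsupp from a function, cut off at n -/
def mkF (n : ℕ) (u : ℕ → ℤ) : ℕ →₀ ℤ := ∑ i ∈ Finset.range n, Finsupp.single i (u i)

lemma mkF_apply (n : ℕ) (u : ℕ → ℤ) (j : ℕ) :
    mkF n u j = if j < n then u j else 0 := by
  rw [mkF, Finset.sum_apply']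
  rw [show (∑ i ∈ Finset.range n, Finsupp.single i (u i) j)
      = ∑ i ∈ Finset.range n, if i = j then u i else 0 from
    Finset.sum_congr rfl (fun i _ => Finsupp.single_apply)]
  rw [Finset.sum_ite_eq']
  simp [Finset.mem_range]

lemma norm_int {f : ↥Mset → X} (hf : Isometry f) (n : ℕ) (u : ℕ → ℤ) :
    ‖∑ i ∈ Finset.range n, ((u i : ℝ)) • vE f i‖ ^ 2
      = ∑ i ∈ Finset.range n, ((u i : ℝ)) ^ 2 := by
  set B := (Finset.range n).sup (fun i => (u i).natAbs) with hBdef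
  set N := max (max n 1) B with hNdef
  have hnN : n ≤ N := le_trans (le_max_left _ _) (le_max_left _ _)
  have hBN : B ≤ N := le_max_right _ _
  have hB4 : B ≤ 4 ^ N := le_trans hBN (le_of_lt (Nat.lt_pow_self (by norm_num : 1 < 4) : N < 4 ^ N))
  set w : ℕ →₀ ℤ := mkF n u with hwdef
  have hwap : ∀ j, w j = if j < n then u j else 0 := mkF_apply n u
  have hsupp : ∀ i, w i ≠ 0 → i < N := by
    intro i hi
    rw [hwap i] at hi
    by_cases h : i < n
    · omega
    · simp [h] at hi
  have hbound : ∀ i, (w i).natAbs ≤ 4 ^ N := by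
    intro i
    rw [hwap i]
    by_cases h : i < n
    · simp only [h, if_true]
      exact le_trans (Finset.le_sup (f := fun i => (u i).natAbs) (Finset.mem_range.2 h)) hB4
    · simp [h]
  have hmain := main_ind hf N _ w (le_refl _) hsupp hbound
  have hmemS : pt (N+1) w ∈ Sset N :=
    pt_mem_Sset (Nat.le_succ N) hsupp (fun i => bound_step N _ (hbound i))
  -- rewrite RHS of hmain
  have hrhs : ∑ i ∈ Finset.range N, ((w i : ℝ)) • Lm f (pt (N+1) (Finsupp.single i 1))
      = (2:ℝ) ^ (N+1) • ∑ i ∈ Finset.range n, ((u i : ℝ)) • vE f i := by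
    rw [Finset.smul_sum]
    rw [← Finset.sum_subset (Finset.range_subset_range.2 hnN)]
    · apply Finset.sum_congr rfl
      intro i hi
      have hin : i < n := Finset.mem_range.1 hi
      have hiN : i < N := by omega
      rw [show pt (N+1) (Finsupp.single i 1) = Ept N i from rfl, Lm_E hf N i (by omega),
        hwap i, if_pos hin, smul_comm ((u i : ℝ)) ((2:ℝ)^(N+1)) (vE f i)]
    · intro i hi hni
      rw [hwap i, if_neg (by simpa using hni)]
      simp
  -- norms
  have hnorm1 : ‖Lm f (pt (N+1) w)‖ = ‖pt (N+1) w‖ := Lm_norm hf (mem_Mset_of_Sset hmemS)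
  have hnormsq : ‖pt (N+1) w‖ ^ 2 = ∑ i ∈ Finset.range n, ((u i:ℝ) * 2 ^ (N+1)) ^ 2 := by
    rw [normsq_eq_sum (pt (N+1) w) N (fun i hi => by
      rw [pt_apply, hwap i, if_neg (by omega)]; simp)]
    rw [← Finset.sum_subset (Finset.range_subset_range.2 hnN)]
    · apply Finset.sum_congr rfl
      intro i hi
      rw [pt_apply, hwap i, if_pos (Finset.mem_range.1 hi)]
    · intro i hi hni
      rw [pt_apply, hwap i, if_neg (by simpa using hni)]
      simp
  have hpow : ((2:ℝ) ^ (N+1)) ≠ 0 := by positivity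
  have hfinal : ((2:ℝ) ^ (N+1)) ^ 2 * ‖∑ i ∈ Finset.range n, ((u i : ℝ)) • vE f i‖ ^ 2
      = ((2:ℝ) ^ (N+1)) ^ 2 * ∑ i ∈ Finset.range n, ((u i : ℝ)) ^ 2 := by
    have h1 : ‖Lm f (pt (N+1) w)‖ ^ 2
        = ((2:ℝ) ^ (N+1)) ^ 2 * ‖∑ i ∈ Finset.range n, ((u i : ℝ)) • vE f i‖ ^ 2 := by
      rw [hmain, hrhs, norm_smul]
      rw [Real.norm_eq_abs, abs_of_pos (by positivity : (0:ℝ) < (2:ℝ)^(N+1))]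
      ring
    rw [← h1, hnorm1, hnormsq, Finset.mul_sum]
    apply Finset.sum_congr rfl
    intro i _
    ring
  have := mul_left_cancel₀ (pow_ne_zero 2 hpow) hfinal
  exact this

lemma norm_rat {f : ↥Mset → X} (hf : Isometry f) (n : ℕ) (q : ℕ → ℚ) :
    ‖∑ i ∈ Finset.range n, ((q i : ℝ)) • vE f i‖ ^ 2
      = ∑ i ∈ Finset.range n, ((q i : ℝ)) ^ 2 := by
  set D : ℕ := ∏ i ∈ Finset.range n, (q i).den with hDdef
  have hD0 : 0 < D := Finset.prod_pos (fun i _ => (q i).pos)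
  have hDR : ((D:ℝ)) ≠ 0 := by positivity
  have hdvd : ∀ i ∈ Finset.range n, ∃ c : ℤ, (D : ℤ) = (q i).den * c := by
    intro i hi
    obtain ⟨c, hc⟩ := Finset.dvd_prod_of_mem (fun i => ((q i).den : ℤ)) hi
    refine ⟨c, ?_⟩
    rw [hDdef]
    push_cast
    exact_mod_cast hc
  classical
  set u : ℕ → ℤ := fun i => if hi : i ∈ Finset.range n
    then (q i).num * Classical.choose (hdvd i hi) else 0 with hudef
  have hqu : ∀ i ∈ Finset.range n, ((q i : ℝ)) = (u i : ℝ) / D := by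
    intro i hi
    have hc := Classical.choose_spec (hdvd i hi)
    have hcR : (D : ℝ) = ((q i).den : ℝ) * (((Classical.choose (hdvd i hi) : ℤ)) : ℝ) := by
      exact_mod_cast hc
    rw [hudef]
    simp only [hi, dif_pos]
    rw [Rat.cast_def]
    push_cast
    rw [hcR]
    have hden : ((q i).den : ℝ) ≠ 0 := by
      exact_mod_cast (q i).den_nz
    have hcne : (((Classical.choose (hdvd i hi) : ℤ)) : ℝ) ≠ 0 := by
      intro h0
      rw [h0, mul_zero] at hcR
      exact hDR hcR
    field_simp
  have hint := norm_int hf n u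
  have h1 : ∑ i ∈ Finset.range n, ((q i : ℝ)) • vE f i
      = (D : ℝ)⁻¹ • ∑ i ∈ Finset.range n, ((u i : ℝ)) • vE f i := by
    rw [Finset.smul_sum]
    apply Finset.sum_congr rfl
    intro i hi
    rw [hqu i hi, smul_smul, div_eq_inv_mul]
  rw [h1, norm_smul, Real.norm_eq_abs, abs_of_pos (by positivity : (0:ℝ) < (D:ℝ)⁻¹),
    mul_pow, hint, Finset.mul_sum]
  apply Finset.sum_congr rfl
  intro i hi
  rw [hqu i hi]
  field_simp

lemma norm_real_fin {f : ↥Mset → X} (hf : Isometry f) (n : ℕ) (b : Fin n → ℝ) :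
    ‖∑ i : Fin n, b i • vE f (i : ℕ)‖ ^ 2 = ∑ i : Fin n, (b i) ^ 2 := by
  classical
  set C : Set (Fin n → ℝ) :=
    { b | ‖∑ i : Fin n, b i • vE f (i : ℕ)‖ ^ 2 = ∑ i : Fin n, (b i) ^ 2 } with hCdef
  have hC_closed : IsClosed C := by
    apply isClosed_eq
    · apply Continuous.pow
      apply Continuous.norm
      apply continuous_finset_sum
      intro i _
      exact (continuous_apply i).smul continuous_const
    · apply continuous_finset_sum
      intro i _
      exact ((continuous_apply i)).pow 2
  have hC_rat : Set.univ.pi (fun _ : Fin n => Set.range ((↑) : ℚ → ℝ)) ⊆ C := by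
    intro b hb
    have : ∀ i : Fin n, ∃ q : ℚ, (q : ℝ) = b i := fun i => hb i (Set.mem_univ i)
    choose q hq using this
    set q' : ℕ → ℚ := fun j => if hj : j < n then q ⟨j, hj⟩ else 0 with hq'def
    have h1 : ∑ i : Fin n, b i • vE f (i : ℕ)
        = ∑ j ∈ Finset.range n, ((q' j : ℝ)) • vE f j := by
      rw [Finset.sum_range (fun j => ((q' j : ℝ)) • vE f j)]
      apply Finset.sum_congr rfl
      intro i _
      rw [hq'def]
      simp only [i.isLt, dif_pos]
      rw [hq i]
    have h2 : ∑ i : Fin n, (b i) ^ 2 = ∑ j ∈ Finset.range n, ((q' j : ℝ)) ^ 2 := by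
      rw [Finset.sum_range (fun j => ((q' j : ℝ)) ^ 2)]
      apply Finset.sum_congr rfl
      intro i _
      rw [hq'def]
      simp only [i.isLt, dif_pos]
      rw [hq i]
    show _ = _
    rw [h1, h2]
    exact norm_rat hf n q'
  have hdense : Dense (Set.univ.pi (fun _ : Fin n => Set.range ((↑) : ℚ → ℝ))) :=
    dense_pi Set.univ (fun i _ => Rat.denseRange_cast)
  have : C = Set.univ := by
    have h := (hdense.mono hC_rat).closure_eq
    rw [hC_closed.closure_eq] at h
    exact h
  exact (this ▸ Set.mem_univ b : b ∈ C)

lemma norm_real_finset {f : ↥Mset → X} (hf : Isometry f) (t : Finset ℕ) (a : ℕ → ℝ) :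
    ‖∑ i ∈ t, a i • vE f i‖ ^ 2 = ∑ i ∈ t, (a i) ^ 2 := by
  classical
  obtain ⟨n, hn⟩ : ∃ n, ∀ i ∈ t, i < n := ⟨(t.sup id) + 1, fun i hi =>
    Nat.lt_succ_of_le (Finset.le_sup (f := id) hi)⟩
  set a' : ℕ → ℝ := fun i => if i ∈ t then a i else 0 with ha'def
  have hsub : t ⊆ Finset.range n := fun i hi => Finset.mem_range.2 (hn i hi)
  have h1 : ∑ i ∈ t, a i • vE f i = ∑ i ∈ Finset.range n, a' i • vE f i :=
    calc ∑ i ∈ t, a i • vE f i = ∑ i ∈ t, a' i • vE f i :=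
          Finset.sum_congr rfl (fun i hi => by simp [ha'def, hi])
    _ = ∑ i ∈ Finset.range n, a' i • vE f i :=
          Finset.sum_subset hsub (fun i _ hni => by simp [ha'def, hni])
  have h2 : ∑ i ∈ t, (a i) ^ 2 = ∑ i ∈ Finset.range n, (a' i) ^ 2 :=
    calc ∑ i ∈ t, (a i) ^ 2 = ∑ i ∈ t, (a' i) ^ 2 :=
          Finset.sum_congr rfl (fun i hi => by simp [ha'def, hi])
    _ = ∑ i ∈ Finset.range n, (a' i) ^ 2 :=
          Finset.sum_subset hsub (fun i _ hni => by simp [ha'def, hni])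
  rw [h1, h2, Finset.sum_range (fun j => a' j • vE f j), Finset.sum_range (fun j => (a' j) ^ 2)]
  exact norm_real_fin hf n (fun i : Fin n => a' i)

lemma lp_hasSum_sq (x : Hl2) : HasSum (fun i => (x i) ^ 2) (‖x‖ ^ 2) := by
  have hp : 0 < (2 : ℝ≥0∞).toReal := by norm_num
  have h := lp.hasSum_norm hp x
  convert h using 2 with i
  · rw [show ((2:ℝ≥0∞).toReal) = ((2:ℕ):ℝ) by norm_num, Real.rpow_natCast,
      Real.norm_eq_abs, sq_abs]
  · rw [show ((2:ℝ≥0∞).toReal) = ((2:ℕ):ℝ) by norm_num, Real.rpow_natCast]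

variable [CompleteSpace X]

lemma summable_smul_vE {f : ↥Mset → X} (hf : Isometry f) (x : Hl2) :
    Summable (fun i => x i • vE f i) := by
  rw [summable_iff_vanishing_norm]
  intro ε hε
  have hsq : Summable (fun i => (x i) ^ 2) := (lp_hasSum_sq x).summable
  obtain ⟨s, hs⟩ := summable_iff_vanishing_norm.1 hsq (ε ^ 2) (by positivity)
  refine ⟨s, fun t ht => ?_⟩
  have h1 : ‖∑ i ∈ t, x i • vE f i‖ ^ 2 = ∑ i ∈ t, (x i) ^ 2 := norm_real_finset hf t _
  have h2 : ∑ i ∈ t, (x i) ^ 2 < ε ^ 2 :=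
    lt_of_le_of_lt (le_abs_self _) (by rw [← Real.norm_eq_abs]; exact hs t ht)
  exact lt_of_pow_lt_pow_left₀ 2 (le_of_lt hε) (by rw [h1]; exact h2)

noncomputable def Tmap (f : ↥Mset → X) : Hl2 → X := fun x => ∑' i, x i • vE f i

lemma Tmap_hasSum {f : ↥Mset → X} (hf : Isometry f) (x : Hl2) :
    HasSum (fun i => x i • vE f i) (Tmap f x) := (summable_smul_vE hf x).hasSum

lemma Tmap_norm {f : ↥Mset → X} (hf : Isometry f) (x : Hl2) : ‖Tmap f x‖ = ‖x‖ := by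
  have h := (Tmap_hasSum hf x).tendsto_sum_nat
  have h2 : Filter.Tendsto (fun n => ‖∑ i ∈ Finset.range n, x i • vE f i‖ ^ 2)
      Filter.atTop (nhds (‖Tmap f x‖ ^ 2)) := (h.norm).pow 2
  have h3 : (fun n => ‖∑ i ∈ Finset.range n, x i • vE f i‖ ^ 2)
      = fun n => ∑ i ∈ Finset.range n, (x i) ^ 2 :=
    funext (fun n => norm_real_finset hf (Finset.range n) _)
  rw [h3] at h2
  have h4 := (lp_hasSum_sq x).tendsto_sum_nat
  have h5 : ‖Tmap f x‖ ^ 2 = ‖x‖ ^ 2 := tendsto_nhds_unique h2 h4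
  rw [← Real.sqrt_sq (norm_nonneg (Tmap f x)), ← Real.sqrt_sq (norm_nonneg x), h5]

lemma Tmap_add {f : ↥Mset → X} (hf : Isometry f) (x y : Hl2) :
    Tmap f (x + y) = Tmap f x + Tmap f y := by
  have hxy : HasSum (fun i => (x + y) i • vE f i) (Tmap f x + Tmap f y) := by
    have := (Tmap_hasSum hf x).add (Tmap_hasSum hf y)
    convert this using 1
    funext i
    rw [lp.coeFn_add, Pi.add_apply, add_smul]
  exact hxy.tsum_eq

lemma Tmap_smul {f : ↥Mset → X} (hf : Isometry f) (c : ℝ) (x : Hl2) :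
    Tmap f (c • x) = c • Tmap f x := by
  have hcx : HasSum (fun i => (c • x) i • vE f i) (c • Tmap f x) := by
    have := (Tmap_hasSum hf x).const_smul c
    convert this using 1
    funext i
    rw [lp.coeFn_smul, Pi.smul_apply, smul_smul, smul_eq_mul]
  exact hcx.tsum_eq

noncomputable def Tiso {f : ↥Mset → X} (hf : Isometry f) : Hl2 →ₗᵢ[ℝ] X where
  toFun := Tmap f
  map_add' := Tmap_add hf
  map_smul' := Tmap_smul hf
  norm_map' := Tmap_norm hf

end Embed

end SCNE2

end


theorem strictly_convex_no_ell2_subspace_not_isometrically_finitely_determined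
    (X : Type*) [NormedAddCommGroup X] [NormedSpace ℝ X] [CompleteSpace X]
    [StrictConvexSpace ℝ X]
    (hfin : ∀ S : Set (lp (fun _ : ℕ => ℝ) 2), S.Finite → ∃ f : S → X, Isometry f)
    (hno : ¬ ∃ Y : Submodule ℝ X, IsClosed (Y : Set X) ∧
      Nonempty (lp (fun _ : ℕ => ℝ) 2 ≃L[ℝ] Y)) :
    ∃ (M : Type) (_ : MetricSpace M), MetricLocallyFinite M ∧
      (∀ S : Set M, S.Finite → ∃ f : S → X, Isometry f) ∧
      ¬ ∃ f : M → X, Isometry f := by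
  refine ⟨↥SCNE2.Mset, inferInstance, SCNE2.locallyFinite_M, ?_, ?_⟩
  · intro S hS
    have hV : (Subtype.val '' S : Set Hl2).Finite := hS.image _
    obtain ⟨g, hg⟩ := hfin (Subtype.val '' S) hV
    refine ⟨fun s => g ⟨(s : ↥SCNE2.Mset), ⟨s, s.2, rfl⟩⟩, ?_⟩
    apply Isometry.of_dist_eq
    intro a b
    rw [hg.dist_eq, Subtype.dist_eq, Subtype.dist_eq, Subtype.dist_eq]
  · rintro ⟨f, hf⟩
    apply hno
    let T := SCNE2.Tiso (X := X) hf
    refine ⟨LinearMap.range T.toLinearMap, ?_, ⟨?_⟩⟩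
    · have h1 : IsClosed (Set.range T) := T.isometry.isClosedEmbedding.isClosed_range
      have h2 : (LinearMap.range T.toLinearMap : Set X) = Set.range T := by
        rw [LinearMap.coe_range]
        rfl
      rw [h2]
      exact h1
    · exact T.equivRange.toContinuousLinearEquiv
end

section
/- There exists a locally finite subset M of the Lebesgue space L^1(ℝ) (with the metric induced by the L^1 norm), containing the zero function, such that M admits no isometric embedding into ℓ_1. -/
open scoped ENNReal
open MeasureTheory

noncomputable def ssmin (a b : ℝ) : ℝ := (|a| + |b| - |a - b|) / 2

lemma abs_sub_of_mul_nonpos {a b : ℝ} (h : a * b ≤ 0) : |a - b| = |a| + |b| := by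
  rcases le_total 0 a with ha | ha <;> rcases le_total 0 b with hb | hb
  · have h0 : a * b = 0 := le_antisymm h (mul_nonneg ha hb)
    rcases mul_eq_zero.mp h0 with h1 | h1 <;> subst h1 <;> simp [abs_sub_comm]
  · rw [abs_of_nonneg ha, abs_of_nonpos hb, abs_of_nonneg (by linarith : (0:ℝ) ≤ a - b)]; ring
  · rw [abs_of_nonpos ha, abs_of_nonneg hb, abs_of_nonpos (by linarith : a - b ≤ 0)]; ring
  · have h0 : 0 ≤ a * b := by
      have := mul_nonneg (neg_nonneg.2 ha) (neg_nonneg.2 hb)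
      rwa [neg_mul_neg] at this
    rcases mul_eq_zero.mp (le_antisymm h h0) with h1 | h1 <;> subst h1 <;> simp [abs_sub_comm]

lemma ssmin_nonneg (a b : ℝ) : 0 ≤ ssmin a b := by
  have h2 : |a - b| ≤ |a| + |b| := abs_sub a b
  unfold ssmin; linarith

lemma ssmin_le_left (a b : ℝ) : ssmin a b ≤ |a| := by
  have h := abs_sub_abs_le_abs_sub b a
  unfold ssmin
  rw [show |a - b| = |b - a| by rw [abs_sub_comm]]
  linarith

lemma ssmin_le_right (a b : ℝ) : ssmin a b ≤ |b| := by
  have h := abs_sub_abs_le_abs_sub a b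
  unfold ssmin; linarith

lemma ssmin_pos_mul {a b : ℝ} (h : 0 < ssmin a b) : 0 < a * b := by
  by_contra hab; push_neg at hab
  have := abs_sub_of_mul_nonpos hab
  unfold ssmin at h; rw [this] at h; linarith

lemma min_ssmin_le (a b c : ℝ) : min (ssmin a b) (ssmin a c) ≤ ssmin b c := by
  rcases le_or_gt (b * c) 0 with h | h
  · have hsbc : ssmin b c = 0 := by unfold ssmin; rw [abs_sub_of_mul_nonpos h]; ring
    rw [hsbc]
    by_contra hcon
    push_neg at hcon
    have h1 := ssmin_pos_mul (lt_of_lt_of_le hcon (min_le_left _ _))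
    have h2 := ssmin_pos_mul (lt_of_lt_of_le hcon (min_le_right _ _))
    have h3 : a ^ 2 * (b * c) ≤ 0 := mul_nonpos_of_nonneg_of_nonpos (sq_nonneg a) h
    nlinarith [mul_pos h1 h2]
  · have habs : |b - c| = |(|b| - |c|)| := by
      rcases le_or_gt 0 b with hb | hb
      · have hc : 0 ≤ c := by
          by_contra hc; push_neg at hc; nlinarith
        rw [abs_of_nonneg hb, abs_of_nonneg hc]
      · have hc : c ≤ 0 := by
          by_contra hc; push_neg at hc; nlinarith
        rw [abs_of_neg hb, abs_of_nonpos hc, show -b - -c = -(b - c) by ring, abs_neg]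
    have hmin : min |b| |c| ≤ ssmin b c := by
      unfold ssmin
      rw [habs]
      rcases le_total |b| |c| with hbc | hbc
      · rw [min_eq_left hbc, abs_of_nonpos (by linarith : |b| - |c| ≤ 0)]; linarith
      · rw [min_eq_right hbc, abs_of_nonneg (by linarith : (0:ℝ) ≤ |b| - |c|)]; linarith
    exact le_trans (min_le_min (ssmin_le_right a b) (ssmin_le_right a c)) hmin

lemma ssmin_mono_between {x y : ℝ} (h : |x| + |y - x| = |y|) (c : ℝ) : ssmin x c ≤ ssmin y c := by
  have h1 : |y - c| ≤ |y - x| + |x - c| := by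
    have := abs_sub_le y x c
    linarith
  unfold ssmin
  linarith

lemma abs_sub_eq_ssmin (a b : ℝ) : |a - b| = |a| + |b| - 2 * ssmin a b := by unfold ssmin; ring

lemma abs_sub_min (x y : ℝ) : |x - y| = x + y - 2 * min x y := by
  rcases le_total x y with h | h
  · rw [min_eq_left h, abs_of_nonpos (by linarith : x - y ≤ 0)]; ring
  · rw [min_eq_right h, abs_of_nonneg (by linarith : (0:ℝ) ≤ x - y)]; ring

lemma core_contradiction (h : ℕ → ℝ) (w : ℕ → ℕ → ℝ)
    (hpos : ∀ i, 0 ≤ h i)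
    (hsum : Summable h)
    (htot : ∑' i, h i = 1)
    (hw0 : ∀ l i, 0 ≤ w l i)
    (hwh : ∀ l i, w l i ≤ h i)
    (hwsum : ∀ l, ∑' i, w l i = 1/2)
    (hwov : ∀ l m, l ≠ m → ∑' i, min (w l i) (w m i) ≤ 3/8) : False := by
  have hws : ∀ l, Summable (w l) := fun l =>
    Summable.of_nonneg_of_le (hw0 l) (hwh l) hsum
  -- separation in full sum
  have hsep : ∀ l m, l ≠ m → (1/4 : ℝ) ≤ ∑' i, |w l i - w m i| := by
    intro l m hlm
    have hmins : Summable (fun i => min (w l i) (w m i)) :=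
      Summable.of_nonneg_of_le (fun i => le_min (hw0 l i) (hw0 m i))
        (fun i => le_trans (min_le_left _ _) (hwh l i)) hsum
    have heq : (fun i => |w l i - w m i|) = fun i => w l i + w m i - 2 * min (w l i) (w m i) := by
      funext i; exact abs_sub_min _ _
    rw [heq]
    rw [Summable.tsum_sub ((hws l).add (hws m)) (hmins.mul_left 2), Summable.tsum_add (hws l) (hws m),
      tsum_mul_left, hwsum l, hwsum m]
    have := hwov l m hlm
    linarith
  -- choose N with tail small
  obtain ⟨N, hN⟩ : ∃ N, (1 : ℝ) - 1/16 ≤ ∑ i ∈ Finset.range N, h i := by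
    have := hsum.hasSum.tendsto_sum_nat
    rw [htot] at this
    have := (this.eventually (eventually_ge_nhds (by norm_num : (1:ℝ) - 1/16 < 1))).exists
    obtain ⟨N, hN⟩ := this
    exact ⟨N, hN⟩
  have htail : ∑' (x : ↑(↑(Finset.range N) : Set ℕ)ᶜ), h ↑x ≤ 1/16 := by
    have h2 := Summable.sum_add_tsum_compl (s := Finset.range N) hsum
    rw [htot] at h2
    linarith
  -- separation on finite window
  have hsepN : ∀ l m, l ≠ m → (1/8 : ℝ) ≤ ∑ i ∈ Finset.range N, |w l i - w m i| := by
    intro l m hlm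
    have habs_le : ∀ i, |w l i - w m i| ≤ h i := by
      intro i
      rw [abs_le]
      constructor <;> nlinarith [hw0 l i, hw0 m i, hwh l i, hwh m i]
    have hsd : Summable (fun i => |w l i - w m i|) :=
      Summable.of_nonneg_of_le (fun i => abs_nonneg _) habs_le hsum
    have hsplit := Summable.sum_add_tsum_compl (s := Finset.range N) hsd
    have htail2 : ∑' (x : ↑(↑(Finset.range N) : Set ℕ)ᶜ), |w l ↑x - w m ↑x| ≤ 1/16 := by
      refine le_trans (Summable.tsum_le_tsum (fun i => habs_le i) (hsd.subtype _) (hsum.subtype _)) htail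
    have := hsep l m hlm
    linarith
  -- N > 0
  rcases Nat.eq_zero_or_pos N with hN0 | hN0
  · have := hsepN 0 1 (by norm_num)
    rw [hN0] at this; simp at this; linarith
  -- compactness
  let F : ℕ → (Fin N → ℝ) := fun l j => w l (j : ℕ)
  have hFmem : ∀ l, F l ∈ Set.Icc (0 : Fin N → ℝ) (fun j => h (j : ℕ)) := by
    intro l
    constructor
    · intro j; exact hw0 l j
    · intro j; exact hwh l j
  obtain ⟨x, -, φ, hφ, hconv⟩ :=
    (isCompact_Icc (a := (0 : Fin N → ℝ)) (b := fun j => h (j : ℕ))).tendsto_subseq hFmem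
  rw [Metric.tendsto_atTop] at hconv
  obtain ⟨K, hK⟩ := hconv (1/(32*N)) (by positivity)
  have h1 := hK K (le_refl K)
  have h2 := hK (K+1) (by omega)
  have hdist : dist (F (φ K)) (F (φ (K+1))) < 1/(16*N) := by
    have := dist_triangle_right (F (φ K)) (F (φ (K+1))) x
    have hN0' : (0:ℝ) < N := by exact_mod_cast hN0
    have hh : (1:ℝ)/(32*N) + 1/(32*N) = 1/(16*N) := by
      field_simp; ring
    calc dist (F (φ K)) (F (φ (K+1))) ≤ _ := this
    _ < 1/(32*N) + 1/(32*N) := by exact add_lt_add h1 h2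
    _ = 1/(16*N) := hh
  have hne : φ K ≠ φ (K+1) := fun hc => by
    have := hφ (show K < K + 1 by omega); omega
  have hlow := hsepN (φ K) (φ (K+1)) hne
  have hup : ∑ i ∈ Finset.range N, |w (φ K) i - w (φ (K+1)) i| < 1/16 := by
    have hterm : ∀ j : Fin N, |w (φ K) (j:ℕ) - w (φ (K+1)) (j:ℕ)| < 1/(16*N) := by
      intro j
      have := dist_le_pi_dist (F (φ K)) (F (φ (K+1))) j
      rw [Real.dist_eq] at this
      exact lt_of_le_of_lt this hdist
    have : ∑ i ∈ Finset.range N, |w (φ K) i - w (φ (K+1)) i|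
        = ∑ j : Fin N, |w (φ K) (j:ℕ) - w (φ (K+1)) (j:ℕ)| := by
      rw [Finset.sum_range fun i => |w (φ K) i - w (φ (K+1)) i|]
    rw [this]
    calc ∑ j : Fin N, |w (φ K) (j:ℕ) - w (φ (K+1)) (j:ℕ)|
        < ∑ _j : Fin N, 1/(16*(N:ℝ)) := by
          apply Finset.sum_lt_sum_of_nonempty
          · exact Finset.univ_nonempty_iff.mpr (Fin.pos_iff_nonempty.mp hN0)
          · intro j _; exact hterm j
    _ = N * (1/(16*(N:ℝ))) := by
          rw [Finset.sum_const]; simp [Finset.card_univ, nsmul_eq_mul]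
    _ = 1/16 := by
          have hN0' : (0:ℝ) < N := by exact_mod_cast hN0
          field_simp
  linarith

lemma tsum_ssmin_eq {a b : ℕ → ℝ} (hsa : Summable fun i => |a i|) (hsb : Summable fun i => |b i|) :
    ∑' i, ssmin (a i) (b i) = ((∑' i, |a i|) + (∑' i, |b i|) - ∑' i, |a i - b i|) / 2 := by
  have hsub : Summable fun i => |a i - b i| :=
    Summable.of_nonneg_of_le (fun i => abs_nonneg _) (fun i => abs_sub (a i) (b i)) (hsa.add hsb)
  have : (fun i => ssmin (a i) (b i)) = fun i => (|a i| + |b i| - |a i - b i|) / 2 := rfl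
  rw [this]
  rw [show (fun i => (|a i| + |b i| - |a i - b i|) / 2)
      = fun i => (|a i| + |b i| - |a i - b i|) * (1/2) by funext i; ring]
  rw [tsum_mul_right, Summable.tsum_sub ((hsa.add hsb)) hsub, Summable.tsum_add hsa hsb]
  ring

lemma summable_ssmin {a b : ℕ → ℝ} (hsa : Summable fun i => |a i|) :
    Summable fun i => ssmin (a i) (b i) :=
  Summable.of_nonneg_of_le (fun i => ssmin_nonneg _ _) (fun i => ssmin_le_left _ _) hsa

lemma lp_side (a : ℕ → ℝ) (b : ℕ → ℕ → ℝ)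
    (hsa : Summable fun i => |a i|)
    (hsb : ∀ l, Summable fun i => |b l i|)
    (hna : ∑' i, |a i| = 1)
    (hnb : ∀ l, ∑' i, |b l i| = l + 3/2)
    (hab : ∀ l, ∑' i, |a i - b l i| = l + 3/2)
    (hbb : ∀ l m : ℕ, l ≠ m → (l + m + 9/4 : ℝ) ≤ ∑' i, |b l i - b m i|) : False := by
  apply core_contradiction (fun i => |a i|) (fun l i => ssmin (a i) (b l i))
    (fun i => abs_nonneg _) hsa hna
    (fun l i => ssmin_nonneg _ _) (fun l i => ssmin_le_left _ _)
  · intro l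
    rw [tsum_ssmin_eq hsa (hsb l), hna, hnb l, hab l]
    ring
  · intro l m hlm
    have h1 : ∑' i, min (ssmin (a i) (b l i)) (ssmin (a i) (b m i))
        ≤ ∑' i, ssmin (b l i) (b m i) := by
      apply Summable.tsum_le_tsum (fun i => min_ssmin_le _ _ _)
      · exact Summable.of_nonneg_of_le
          (fun i => le_min (ssmin_nonneg _ _) (ssmin_nonneg _ _))
          (fun i => le_trans (min_le_left _ _) (ssmin_le_left _ _)) hsa
      · exact summable_ssmin (hsb l)
    have h2 : ∑' i, ssmin (b l i) (b m i) ≤ 3/8 := by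
      rw [tsum_ssmin_eq (hsb l) (hsb m), hnb l, hnb m]
      have := hbb l m hlm
      linarith
    linarith

noncomputable def DD : Set ℝ := Set.Ico (0:ℝ) 1
noncomputable def EE (l : ℕ) : Set ℝ := Set.Ico ((l:ℝ)+2) ((l:ℝ)+3)

noncomputable def ggfun (l : ℕ) : ℝ → ℝ := fun t => (1 + Real.cos (2*Real.pi*((l:ℝ)+1)*t))/2
noncomputable def gg (l : ℕ) : ℝ → ℝ := DD.indicator (ggfun l)
noncomputable def tl (l : ℕ) : ℝ → ℝ := (EE l).indicator (fun _ => (l:ℝ)+1)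
noncomputable def xf : ℝ → ℝ := DD.indicator (fun _ => (1:ℝ))
noncomputable def yf (l : ℕ) : ℝ → ℝ := fun t => gg l t + tl l t

lemma ggfun_cont (l : ℕ) : Continuous (ggfun l) := by
  unfold ggfun; fun_prop

lemma ggfun_nonneg (l : ℕ) (t : ℝ) : 0 ≤ ggfun l t := by
  unfold ggfun
  have := Real.neg_one_le_cos (2*Real.pi*((l:ℝ)+1)*t)
  linarith

lemma ggfun_le_one (l : ℕ) (t : ℝ) : ggfun l t ≤ 1 := by
  unfold ggfun
  have := Real.cos_le_one (2*Real.pi*((l:ℝ)+1)*t)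
  linarith

lemma DD_meas : MeasurableSet DD := measurableSet_Ico
lemma EE_meas (l : ℕ) : MeasurableSet (EE l) := measurableSet_Ico

lemma DD_EE_disj (l : ℕ) {t : ℝ} (ht : t ∈ DD) : t ∉ EE l := by
  intro h
  simp only [DD, EE, Set.mem_Ico] at ht h
  have h2 : (0:ℝ) ≤ (l:ℝ) := Nat.cast_nonneg l
  linarith [ht.2, h.1]

lemma EE_EE_disj {l m : ℕ} (h : l ≠ m) {t : ℝ} (ht : t ∈ EE l) : t ∉ EE m := by
  intro h2
  simp only [EE, Set.mem_Ico] at ht h2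
  rcases Nat.lt_or_ge l m with hlm | hlm
  · have : (l:ℝ) + 1 ≤ m := by exact_mod_cast hlm
    linarith [ht.2, h2.1]
  · have hlm' : m < l := lt_of_le_of_ne hlm (Ne.symm h)
    have : (m:ℝ) + 1 ≤ l := by exact_mod_cast hlm'
    linarith [ht.1, h2.2]

-- integrability
lemma integrable_DD_ind {φ : ℝ → ℝ} (hφ : Continuous φ) : Integrable (DD.indicator φ) := by
  apply IntegrableOn.integrable_indicator _ DD_meas
  exact (hφ.integrableOn_Icc (a := 0) (b := 1)).mono_set Set.Ico_subset_Icc_self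

lemma integrable_tl (l : ℕ) : Integrable (tl l) := by
  apply IntegrableOn.integrable_indicator _ (EE_meas l)
  rw [integrableOn_const_iff]
  right
  rw [EE, Real.volume_Ico]
  exact ENNReal.ofReal_lt_top

lemma integrable_gg (l : ℕ) : Integrable (gg l) := integrable_DD_ind (ggfun_cont l)
lemma integrable_xf : Integrable xf := integrable_DD_ind continuous_const
lemma integrable_yf (l : ℕ) : Integrable (yf l) := (integrable_gg l).add (integrable_tl l)

-- set integral conversions
lemma integral_DD (φ : ℝ → ℝ) : ∫ x, DD.indicator φ x = ∫ x in (0:ℝ)..1, φ x := by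
  rw [MeasureTheory.integral_indicator DD_meas]
  unfold DD
  rw [integral_Ico_eq_integral_Ioo, ← integral_Ioc_eq_integral_Ioo,
    ← intervalIntegral.integral_of_le zero_le_one]

lemma integral_tl (l : ℕ) : ∫ x, tl l x = (l:ℝ) + 1 := by
  unfold tl
  rw [MeasureTheory.integral_indicator (EE_meas l), setIntegral_const]
  unfold EE
  rw [Real.volume_real_Ico]
  rw [show (l:ℝ) + 3 - ((l:ℝ)+2) = 1 by ring]
  simp

-- trig integrals
lemma sin_two_pi_int (k : ℤ) : Real.sin (2*Real.pi*(k:ℝ)) = 0 := by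
  rw [show 2*Real.pi*(k:ℝ) = ((2*k : ℤ) : ℝ) * Real.pi by push_cast; ring]
  exact Real.sin_int_mul_pi (2*k)

lemma int_cos_int (k : ℤ) (hk : k ≠ 0) : ∫ t in (0:ℝ)..1, Real.cos (2*Real.pi*(k:ℝ)*t) = 0 := by
  have hk' : (k:ℝ) ≠ 0 := Int.cast_ne_zero.mpr hk
  have hc : (2*Real.pi*(k:ℝ)) ≠ 0 :=
    mul_ne_zero (mul_ne_zero two_ne_zero Real.pi_ne_zero) hk'
  have := intervalIntegral.integral_comp_mul_left (a := (0:ℝ)) (b := 1) Real.cos hc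
  simp only [mul_zero, mul_one] at this
  rw [this, integral_cos, Real.sin_zero, sin_two_pi_int k, sub_zero, smul_eq_mul, mul_zero]

lemma int_cos_nat (n : ℕ) (hn : n ≠ 0) : ∫ t in (0:ℝ)..1, Real.cos (2*Real.pi*(n:ℝ)*t) = 0 := by
  have := int_cos_int (n : ℤ) (by exact_mod_cast hn)
  push_cast at this
  exact this

lemma cos_ii (n : ℕ) : IntervalIntegrable (fun t => Real.cos (2*Real.pi*(n:ℝ)*t)) volume 0 1 :=
  (by fun_prop : Continuous fun t => Real.cos (2*Real.pi*(n:ℝ)*t)).intervalIntegrable 0 1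

lemma int_ggfun (l : ℕ) : ∫ t in (0:ℝ)..1, ggfun l t = 1/2 := by
  unfold ggfun
  have h1 : (fun t => (1 + Real.cos (2*Real.pi*((l:ℝ)+1)*t))/2)
      = fun t => 1/2 + (1/2) * Real.cos (2*Real.pi*(((l+1:ℕ)):ℝ)*t) := by
    funext t; push_cast; ring
  rw [h1, intervalIntegral.integral_add ((by fun_prop : Continuous fun _:ℝ => (1:ℝ)/2).intervalIntegrable 0 1)
      ((cos_ii (l+1)).const_mul (1/2)),
    intervalIntegral.integral_const, intervalIntegral.integral_const_mul,
    int_cos_nat (l+1) (Nat.succ_ne_zero l)]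
  norm_num

lemma int_one_sub_ggfun (l : ℕ) : ∫ t in (0:ℝ)..1, (1 - ggfun l t) = 1/2 := by
  rw [intervalIntegral.integral_sub ((by fun_prop : Continuous fun _:ℝ => (1:ℝ)).intervalIntegrable 0 1)
      ((ggfun_cont l).intervalIntegrable 0 1), intervalIntegral.integral_const, int_ggfun]
  norm_num

lemma int_cos_sq (n : ℕ) (hn : n ≠ 0) :
    ∫ t in (0:ℝ)..1, Real.cos (2*Real.pi*(n:ℝ)*t)^2 = 1/2 := by
  have h1 : (fun t => Real.cos (2*Real.pi*(n:ℝ)*t)^2)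
      = fun t => 1/2 + (1/2) * Real.cos (2*Real.pi*((2*n : ℕ):ℝ)*t) := by
    funext t
    rw [Real.cos_sq]
    push_cast
    ring_nf
  rw [h1, intervalIntegral.integral_add ((by fun_prop : Continuous fun _:ℝ => (1:ℝ)/2).intervalIntegrable 0 1)
      ((cos_ii (2*n)).const_mul (1/2)),
    intervalIntegral.integral_const, intervalIntegral.integral_const_mul,
    int_cos_nat (2*n) (by omega)]
  norm_num

lemma int_cos_mul_cos {n m : ℕ} (hn : n ≠ 0) (hm : m ≠ 0) (hnm : n ≠ m) :
    ∫ t in (0:ℝ)..1, Real.cos (2*Real.pi*(n:ℝ)*t) * Real.cos (2*Real.pi*(m:ℝ)*t) = 0 := by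
  have hptw : (fun t => Real.cos (2*Real.pi*(n:ℝ)*t) * Real.cos (2*Real.pi*(m:ℝ)*t))
      = fun t => (1/2) * Real.cos (2*Real.pi*(((n+m:ℕ)):ℝ)*t)
        + (1/2) * Real.cos (2*Real.pi*(((n:ℤ)-(m:ℤ)):ℝ)*t) := by
    funext t
    have := Real.cos_add (2*Real.pi*(n:ℝ)*t) (2*Real.pi*(m:ℝ)*t)
    have h2 := Real.cos_sub (2*Real.pi*(n:ℝ)*t) (2*Real.pi*(m:ℝ)*t)
    have e1 : 2*Real.pi*(((n+m:ℕ)):ℝ)*t = 2*Real.pi*(n:ℝ)*t + 2*Real.pi*(m:ℝ)*t := by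
      push_cast; ring
    have e2 : 2*Real.pi*(((n:ℤ)-(m:ℤ)):ℝ)*t = 2*Real.pi*(n:ℝ)*t - 2*Real.pi*(m:ℝ)*t := by
      push_cast; ring
    rw [e1, e2, this, h2]
    ring
  have hii1 : IntervalIntegrable (fun t => (1/2) * Real.cos (2*Real.pi*(((n+m:ℕ)):ℝ)*t)) volume 0 1 :=
    (cos_ii (n+m)).const_mul _
  have hii2 : IntervalIntegrable (fun t => (1/2) * Real.cos (2*Real.pi*(((n:ℤ)-(m:ℤ)):ℝ)*t)) volume 0 1 :=
    ((by fun_prop : Continuous fun t => Real.cos (2*Real.pi*(((n:ℤ)-(m:ℤ)):ℝ)*t)).intervalIntegrable 0 1).const_mul _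
  rw [hptw, intervalIntegral.integral_add hii1 hii2,
    intervalIntegral.integral_const_mul, intervalIntegral.integral_const_mul,
    int_cos_nat (n+m) (by omega)]
  have h3 := int_cos_int ((n:ℤ)-(m:ℤ)) (by omega)
  push_cast at h3 ⊢
  rw [h3]
  ring

lemma int_abs_ggfun_sub {l m : ℕ} (h : l ≠ m) :
    (1/4 : ℝ) ≤ ∫ t in (0:ℝ)..1, |ggfun l t - ggfun m t| := by
  set A : ℝ → ℝ := fun t => Real.cos (2*Real.pi*((l+1:ℕ):ℝ)*t) with hA
  set B : ℝ → ℝ := fun t => Real.cos (2*Real.pi*((m+1:ℕ):ℝ)*t) with hB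
  have hgd : ∀ t, ggfun l t - ggfun m t = (A t - B t)/2 := by
    intro t
    simp only [hA, hB, ggfun]
    push_cast
    ring
  have hsq : ∫ t in (0:ℝ)..1, (A t - B t)^2 = 1 := by
    have hptw : (fun t => (A t - B t)^2) = fun t => A t^2 + B t^2 - 2*(A t * B t) := by
      funext t; ring
    rw [hptw]
    have hiA : IntervalIntegrable (fun t => A t^2) volume 0 1 := by
      apply Continuous.intervalIntegrable; simp only [hA]; fun_prop
    have hiB : IntervalIntegrable (fun t => B t^2) volume 0 1 := by
      apply Continuous.intervalIntegrable; simp only [hB]; fun_prop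
    have hiAB : IntervalIntegrable (fun t => 2*(A t * B t)) volume 0 1 := by
      apply Continuous.intervalIntegrable; simp only [hA, hB]; fun_prop
    rw [intervalIntegral.integral_sub (hiA.add hiB) hiAB,
      intervalIntegral.integral_add hiA hiB]
    simp only [hA, hB]
    rw [int_cos_sq (l+1) (by omega), int_cos_sq (m+1) (by omega),
      intervalIntegral.integral_const_mul,
      int_cos_mul_cos (by omega : l+1 ≠ 0) (by omega : m+1 ≠ 0) (by omega)]
    ring
  have habs : ∫ t in (0:ℝ)..1, |A t - B t| ≥ 1/2 := by
    have hptw : ∀ t ∈ Set.uIcc (0:ℝ) 1, (A t - B t)^2 ≤ 2 * |A t - B t| := by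
      intro t _
      have h1 : |A t - B t| ≤ 2 := by
        simp only [hA, hB]
        have := Real.neg_one_le_cos (2*Real.pi*((l+1:ℕ):ℝ)*t)
        have := Real.cos_le_one (2*Real.pi*((l+1:ℕ):ℝ)*t)
        have := Real.neg_one_le_cos (2*Real.pi*((m+1:ℕ):ℝ)*t)
        have := Real.cos_le_one (2*Real.pi*((m+1:ℕ):ℝ)*t)
        rw [abs_le]; constructor <;> linarith
      have h2 : (A t - B t)^2 = |A t - B t|^2 := (sq_abs _).symm
      nlinarith [abs_nonneg (A t - B t)]
    have hmono := intervalIntegral.integral_mono_on zero_le_one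
      (by apply Continuous.intervalIntegrable; simp only [hA, hB]; fun_prop)
      (((by apply Continuous.intervalIntegrable; simp only [hA, hB]; fun_prop :
        IntervalIntegrable (fun t => |A t - B t|) volume 0 1)).const_mul 2)
      (fun t ht => hptw t (by rw [Set.uIcc_of_le zero_le_one]; exact ht))
    rw [hsq, intervalIntegral.integral_const_mul] at hmono
    linarith
  have heq : ∫ t in (0:ℝ)..1, |ggfun l t - ggfun m t| = (∫ t in (0:ℝ)..1, |A t - B t|)/2 := by
    rw [← intervalIntegral.integral_div]
    apply intervalIntegral.integral_congr
    intro t _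
    dsimp only
    rw [hgd t, abs_div]
    norm_num
  rw [heq]
  linarith

-- pointwise nonneg
lemma gg_nonneg (l : ℕ) (t : ℝ) : 0 ≤ gg l t :=
  Set.indicator_apply_nonneg (fun _ => ggfun_nonneg l t)

lemma tl_nonneg (l : ℕ) (t : ℝ) : 0 ≤ tl l t :=
  Set.indicator_apply_nonneg (fun _ => by positivity)

lemma yf_nonneg (l : ℕ) (t : ℝ) : 0 ≤ yf l t := add_nonneg (gg_nonneg l t) (tl_nonneg l t)

-- V1
lemma V1 : ∫ x, |xf x| = 1 := by
  have h : (fun x => |xf x|) = xf := by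
    funext t
    exact abs_of_nonneg (Set.indicator_apply_nonneg (fun _ => zero_le_one))
  rw [h]
  unfold xf
  rw [integral_DD]
  simp

-- V2
lemma V2 (l : ℕ) : ∫ x, |yf l x| = (l:ℝ) + 3/2 := by
  have h : (fun x => |yf l x|) = fun x => gg l x + tl l x := by
    funext t
    exact abs_of_nonneg (yf_nonneg l t)
  rw [h, integral_add (integrable_gg l) (integrable_tl l)]
  unfold gg
  rw [integral_DD, int_ggfun, integral_tl]
  ring

-- V3
lemma V3 (l : ℕ) : ∫ x, |xf x - yf l x| = (l:ℝ) + 3/2 := by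
  have h : (fun x => |xf x - yf l x|)
      = fun x => DD.indicator (fun u => 1 - ggfun l u) x + tl l x := by
    funext t
    by_cases hD : t ∈ DD
    · have hE : t ∉ EE l := DD_EE_disj l hD
      simp only [xf, yf, gg, tl, Set.indicator_of_mem hD, Set.indicator_of_notMem hE, add_zero]
      exact abs_of_nonneg (by linarith [ggfun_le_one l t])
    · by_cases hE : t ∈ EE l
      · simp only [xf, yf, gg, tl, Set.indicator_of_notMem hD, Set.indicator_of_mem hE, zero_add]
        rw [show (0:ℝ) - ((l:ℝ)+1) = -((l:ℝ)+1) by ring, abs_neg]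
        exact abs_of_nonneg (by positivity)
      · simp only [xf, yf, gg, tl, Set.indicator_of_notMem hD, Set.indicator_of_notMem hE]
        simp
  rw [h, integral_add (integrable_DD_ind (φ := fun u => 1 - ggfun l u) (continuous_const.sub (ggfun_cont l))) (integrable_tl l),
    integral_DD, int_one_sub_ggfun, integral_tl]
  ring

-- V4
lemma V4 {l m : ℕ} (hlm : l ≠ m) : (l:ℝ) + m + 9/4 ≤ ∫ x, |yf l x - yf m x| := by
  have h : (fun x => |yf l x - yf m x|)
      = fun x => DD.indicator (fun u => |ggfun l u - ggfun m u|) x + (tl l x + tl m x) := by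
    funext t
    by_cases hD : t ∈ DD
    · have hEl : t ∉ EE l := DD_EE_disj l hD
      have hEm : t ∉ EE m := DD_EE_disj m hD
      simp only [yf, gg, tl, Set.indicator_of_mem hD, Set.indicator_of_notMem hEl,
        Set.indicator_of_notMem hEm, add_zero]
    · by_cases hEl : t ∈ EE l
      · have hEm : t ∉ EE m := EE_EE_disj hlm hEl
        simp only [yf, gg, tl, Set.indicator_of_notMem hD, Set.indicator_of_mem hEl,
          Set.indicator_of_notMem hEm, zero_add, add_zero, sub_zero]
        exact abs_of_nonneg (by positivity)
      · by_cases hEm : t ∈ EE m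
        · simp only [yf, gg, tl, Set.indicator_of_notMem hD, Set.indicator_of_notMem hEl,
            Set.indicator_of_mem hEm, zero_add]
          rw [show (0:ℝ) - ((m:ℝ)+1) = -((m:ℝ)+1) by ring, abs_neg]
          exact abs_of_nonneg (by positivity)
        · simp only [yf, gg, tl, Set.indicator_of_notMem hD, Set.indicator_of_notMem hEl,
            Set.indicator_of_notMem hEm]
          simp
  have hcont : Continuous fun u => |ggfun l u - ggfun m u| := ((ggfun_cont l).sub (ggfun_cont m)).abs
  have hsum2 : Integrable (fun x => tl l x + tl m x) := (integrable_tl l).add (integrable_tl m)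
  rw [h, integral_add (integrable_DD_ind hcont) hsum2,
    integral_add (integrable_tl l) (integrable_tl m), integral_DD, integral_tl, integral_tl]
  have := int_abs_ggfun_sub hlm
  linarith

-- Lp elements
lemma norm_toLp_int {f : ℝ → ℝ} (hf : Integrable f) :
    ‖(memLp_one_iff_integrable.mpr hf).toLp f‖ = ∫ x, |f x| := by
  rw [Lp.norm_toLp, eLpNorm_one_eq_lintegral_enorm,
    ← integral_norm_eq_lintegral_enorm hf.aestronglyMeasurable]
  simp [Real.norm_eq_abs]

noncomputable def Xp : Lp ℝ 1 (volume : Measure ℝ) :=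
  (memLp_one_iff_integrable.mpr integrable_xf).toLp xf

noncomputable def Yp (l : ℕ) : Lp ℝ 1 (volume : Measure ℝ) :=
  (memLp_one_iff_integrable.mpr (integrable_yf l)).toLp (yf l)

lemma norm_Xp : ‖Xp‖ = 1 := by
  unfold Xp; rw [norm_toLp_int integrable_xf, V1]

lemma norm_Yp (l : ℕ) : ‖Yp l‖ = (l:ℝ) + 3/2 := by
  unfold Yp; rw [norm_toLp_int (integrable_yf l), V2]

lemma dist_toLp_int {f g : ℝ → ℝ} (hf : Integrable f) (hg : Integrable g) :
    dist ((memLp_one_iff_integrable.mpr hf).toLp f) ((memLp_one_iff_integrable.mpr hg).toLp g)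
      = ∫ x, |f x - g x| := by
  rw [dist_eq_norm, ← MemLp.toLp_sub]
  have h2 := norm_toLp_int (hf.sub hg)
  rw [show ((memLp_one_iff_integrable.mpr hf).sub (memLp_one_iff_integrable.mpr hg)).toLp (f - g)
      = (memLp_one_iff_integrable.mpr (hf.sub hg)).toLp (f - g) from rfl, h2]
  rfl

lemma dist_Xp_Yp (l : ℕ) : dist Xp (Yp l) = (l:ℝ) + 3/2 := by
  unfold Xp Yp; rw [dist_toLp_int integrable_xf (integrable_yf l), V3]

lemma dist_Yp_Yp {l m : ℕ} (hlm : l ≠ m) : (l:ℝ) + m + 9/4 ≤ dist (Yp l) (Yp m) := by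
  unfold Yp; rw [dist_toLp_int (integrable_yf l) (integrable_yf m)]
  exact V4 hlm

-- ℓ1 coordinate facts
lemma lp_abs_summable (z : lp (fun _ : ℕ => ℝ) 1) : Summable fun i => |z i| := by
  have h := lp.memℓp z
  rw [memℓp_gen_iff (p := 1) (by simp : 0 < ENNReal.toReal 1)] at h
  simpa [ENNReal.toReal_one, Real.norm_eq_abs] using h

lemma lp_norm_eq (z : lp (fun _ : ℕ => ℝ) 1) : ‖z‖ = ∑' i, |z i| := by
  rw [lp.norm_eq_tsum_rpow (by simp : 0 < ENNReal.toReal 1) z]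
  simp [ENNReal.toReal_one, Real.rpow_one, Real.norm_eq_abs]

lemma lp_sub_apply (u v : lp (fun _ : ℕ => ℝ) 1) (i : ℕ) : (u - v : lp (fun _ : ℕ => ℝ) 1) i = u i - v i := by
  rw [lp.coeFn_sub]
  rfl

lemma lp_side' (A : lp (fun _ : ℕ => ℝ) 1) (B : ℕ → lp (fun _ : ℕ => ℝ) 1)
    (hnA : ‖A‖ = 1)
    (hnB : ∀ l : ℕ, ‖B l‖ = (l:ℝ) + 3/2)
    (hnAB : ∀ l : ℕ, ‖A - B l‖ = (l:ℝ) + 3/2)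
    (hnBB : ∀ l m : ℕ, l ≠ m → (l:ℝ) + m + 9/4 ≤ ‖B l - B m‖) : False := by
  apply lp_side (fun i => A i) (fun l i => B l i) (lp_abs_summable A)
    (fun l => lp_abs_summable (B l))
  · rw [← lp_norm_eq A]; exact hnA
  · intro l
    rw [← lp_norm_eq (B l)]; exact hnB l
  · intro l
    have h : (fun i => |A i - B l i|) = fun i => |(A - B l : lp (fun _ : ℕ => ℝ) 1) i| := by
      funext i; rw [lp_sub_apply]
    rw [show ∑' i, |A i - B l i| = ∑' i, |(A - B l : lp (fun _ : ℕ => ℝ) 1) i| from congrArg tsum h,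
      ← lp_norm_eq (A - B l)]
    exact hnAB l
  · intro l m hlm
    have h : (fun i => |B l i - B m i|) = fun i => |(B l - B m : lp (fun _ : ℕ => ℝ) 1) i| := by
      funext i; rw [lp_sub_apply]
    rw [show ∑' i, |B l i - B m i| = ∑' i, |(B l - B m : lp (fun _ : ℕ => ℝ) 1) i| from congrArg tsum h,
      ← lp_norm_eq (B l - B m)]
    exact hnBB l m hlm

set_option maxHeartbeats 1000000 in
theorem exists_locally_finite_subset_of_L1_not_embeddable_into_ell1 :
    ∃ M : Set (Lp ℝ 1 (volume : Measure ℝ)),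
      (0 : Lp ℝ 1 (volume : Measure ℝ)) ∈ M ∧
      (∀ (f : Lp ℝ 1 (volume : Measure ℝ)) (R : ℝ),
        (M ∩ Metric.closedBall f R).Finite) ∧
      ¬ ∃ T : M → lp (fun _ : ℕ => ℝ) 1, Isometry T := by
  classical
  refine ⟨insert 0 (insert Xp (Set.range Yp)), Set.mem_insert _ _, ?_, ?_⟩
  · intro f R
    apply Set.Finite.subset (Set.Finite.insert (0 : Lp ℝ 1 (volume : Measure ℝ))
      (Set.Finite.insert Xp
        (Set.Finite.image Yp (Set.finite_Iic (Nat.floor (max (‖f‖ + R) 0))))))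
    rintro z ⟨hzM, hzB⟩
    have hnorm : ‖z‖ ≤ ‖f‖ + R := by
      have h1 : dist z f ≤ R := Metric.mem_closedBall.mp hzB
      have h2 := norm_sub_norm_le z f
      rw [← dist_eq_norm] at h2
      linarith
    rcases hzM with rfl | hz
    · exact Set.mem_insert _ _
    rcases hz with rfl | hz
    · exact Set.mem_insert_of_mem _ (Set.mem_insert _ _)
    obtain ⟨l, rfl⟩ := hz
    refine Set.mem_insert_of_mem _ (Set.mem_insert_of_mem _ ⟨l, ?_, rfl⟩)
    have h3 : (l:ℝ) ≤ ‖f‖ + R := by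
      have h4 := norm_Yp l
      rw [h4] at hnorm
      linarith
    exact Nat.le_floor (le_trans h3 (le_max_left _ _))
  · rintro ⟨T, hT⟩
    haveI : Fact ((1:ENNReal) ≤ 1) := ⟨le_refl _⟩
    have m0 : (0 : Lp ℝ 1 (volume : Measure ℝ)) ∈
        insert 0 (insert Xp (Set.range Yp)) := Set.mem_insert _ _
    have mX : Xp ∈ insert 0 (insert Xp (Set.range Yp)) :=
      Set.mem_insert_of_mem _ (Set.mem_insert _ _)
    have mY : ∀ l, Yp l ∈ insert 0 (insert Xp (Set.range Yp)) :=
      fun l => Set.mem_insert_of_mem _ (Set.mem_insert_of_mem _ ⟨l, rfl⟩)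
    have hd : ∀ u v : ↥(insert 0 (insert Xp (Set.range Yp))),
        dist (T u) (T v)
          = dist (u : Lp ℝ 1 (volume : Measure ℝ)) (v : Lp ℝ 1 (volume : Measure ℝ)) :=
      fun u v => (hT.dist_eq u v).trans (Subtype.dist_eq u v)
    apply lp_side' (T ⟨Xp, mX⟩ - T ⟨0, m0⟩) (fun l => T ⟨Yp l, mY l⟩ - T ⟨0, m0⟩)
    · rw [← dist_eq_norm, hd ⟨Xp, mX⟩ ⟨0, m0⟩]
      show dist Xp (0 : Lp ℝ 1 (volume : Measure ℝ)) = 1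
      rw [dist_zero_right, norm_Xp]
    · intro l
      rw [← dist_eq_norm, hd ⟨Yp l, mY l⟩ ⟨0, m0⟩]
      show dist (Yp l) (0 : Lp ℝ 1 (volume : Measure ℝ)) = (l:ℝ) + 3/2
      rw [dist_zero_right, norm_Yp]
    · intro l
      rw [sub_sub_sub_cancel_right, ← dist_eq_norm, hd ⟨Xp, mX⟩ ⟨Yp l, mY l⟩]
      show dist Xp (Yp l) = (l:ℝ) + 3/2
      rw [dist_Xp_Yp]
    · intro l m hlm
      rw [sub_sub_sub_cancel_right, ← dist_eq_norm, hd ⟨Yp l, mY l⟩ ⟨Yp m, mY m⟩]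
      show (l:ℝ) + m + 9/4 ≤ dist (Yp l) (Yp m)
      exact dist_Yp_Yp hlm
end
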